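/- arXiv:math/0001076 — 5 statements merged into one kernel-verified Lean document; each statement's English description precedes it below -/
import Mathlib

section
/- Let S be a separable metric space, ρ ∈ P(S), and for each n let ρ_n be a symmetric probability measure on S^n. If {ρ_n} is ρ-chaotic (Kac's condition holds for all k), then for every bounded continuous g : S → ℝ, ∫_{S^n} | (1/n) Σ_{i=1}^n g(s_i) − ∫ g dρ |² dρ_n(s) → 0 as n → ∞. -/
open MeasureTheory Filter Topology BoundedContinuousFunction
open scoped ENNReal NNReal

noncomputable def avgDirac {α β : Type*} [Fintype α] [MeasurableSpace β] (g : α → β) :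
    Measure β :=
  ((Fintype.card α : ℝ≥0∞))⁻¹ • ∑ a : α, Measure.dirac (g a)

instance {α β : Type*} [Fintype α] [Nonempty α] [MeasurableSpace β] (g : α → β) :
    IsProbabilityMeasure (avgDirac g) := by
  constructor
  simp [avgDirac, Measure.finset_sum_apply, ENNReal.inv_mul_cancel,
    Fintype.card_ne_zero]

noncomputable def empiricalMeasure {S : Type*} [MeasurableSpace S] {n : ℕ} (s : Fin n → S) :
    Measure S :=
  avgDirac s

instance {S : Type*} [MeasurableSpace S] {n : ℕ} [NeZero n] (s : Fin n → S) :
    IsProbabilityMeasure (empiricalMeasure s) := by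
  have : Nonempty (Fin n) := Fin.pos_iff_nonempty.mp (Nat.pos_of_ne_zero (NeZero.ne n))
  unfold empiricalMeasure
  infer_instance

noncomputable def empiricalPM {S : Type*} [MeasurableSpace S] (n : ℕ) [NeZero n]
    (s : Fin n → S) : ProbabilityMeasure S :=
  ⟨empiricalMeasure s, inferInstance⟩

def IsSymmetricLaw {S : Type*} [MeasurableSpace S] {n : ℕ} (μ : Measure (Fin n → S)) : Prop :=
  ∀ π : Equiv.Perm (Fin n), Measure.map (fun s => s ∘ π) μ = μ

/-- Kac's condition: `ρ` is `p`-chaotic. -/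
def IsChaotic {S : Type*} [MeasurableSpace S] [TopologicalSpace S]
    (ρ : ∀ n, Measure (Fin n → S)) (p : Measure S) : Prop :=
  ∀ (k : ℕ) (φ : Fin k → (S →ᵇ ℝ)),
    Tendsto
      (fun n => ∫ s, ∏ i : Fin k, φ i (s (Fin.castLE (by omega) i)) ∂ (ρ (k + n + 1)))
      atTop (𝓝 (∏ i : Fin k, ∫ x, φ i x ∂ p))

/-- The laws of the empirical measures converge to the point mass at `p` in `P(P(S))`. -/
def EmpLawTendsto {S : Type*} [MeasurableSpace S] [TopologicalSpace S] [OpensMeasurableSpace S]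
    (ρ : ∀ n, Measure (Fin n → S)) (p : ProbabilityMeasure S) : Prop :=
  ∀ Φ : ProbabilityMeasure S →ᵇ ℝ,
    Tendsto (fun n => ∫ s, Φ (empiricalPM (n + 1) s) ∂ (ρ (n + 1))) atTop (𝓝 (Φ p))


lemma perm_integral {S : Type*} [MetricSpace S] [TopologicalSpace.SeparableSpace S]
    [MeasurableSpace S] [BorelSpace S] {n : ℕ} {μ : Measure (Fin n → S)}
    (hs : IsSymmetricLaw μ) (π : Equiv.Perm (Fin n)) (f : (Fin n → S) →ᵇ ℝ) :
    ∫ s, f (s ∘ π) ∂μ = ∫ s, f s ∂μ := by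
  haveI : SecondCountableTopology S := UniformSpace.secondCountable_of_separable S
  have hT : Measurable fun s : Fin n → S => s ∘ π :=
    measurable_pi_lambda _ fun i => measurable_pi_apply _
  conv_rhs => rw [← hs π]
  rw [integral_map hT.aemeasurable f.continuous.measurable.aestronglyMeasurable]

/-- If `{ρ_n}` is `p`-chaotic, then the empirical averages of any bounded continuous `g`
converge to `∫ g dp` in mean square. -/
theorem stmt2 {S : Type*} [MetricSpace S] [TopologicalSpace.SeparableSpace S]
    [MeasurableSpace S] [BorelSpace S]
    (ρ : ∀ n, Measure (Fin n → S)) (hprob : ∀ n, IsProbabilityMeasure (ρ n))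
    (hsym : ∀ n, IsSymmetricLaw (ρ n))
    (p : Measure S) [IsProbabilityMeasure p]
    (hchaos : IsChaotic ρ p) (g : S →ᵇ ℝ) :
    Tendsto
      (fun n => ∫ s, |(1 / ((n : ℝ) + 1)) * ∑ i : Fin (n + 1), g (s i) - ∫ x, g x ∂p| ^ 2
        ∂ (ρ (n + 1)))
      atTop (𝓝 0) := by
  haveI : SecondCountableTopology S := UniformSpace.secondCountable_of_separable S
  set m : ℝ := ∫ x, g x ∂p with hm
  set E : ℕ → ℝ := fun k => ∫ s : Fin (k+1) → S, g (s 0) ∂(ρ (k+1)) with hE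
  set C : ℕ → ℝ := fun k => ∫ s : Fin (k+1) → S, g (s 0) * g (s 1) ∂(ρ (k+1)) with hCdef
  set D : ℕ → ℝ := fun k => ∫ s : Fin (k+1) → S, g (s 0) * g (s 0) ∂(ρ (k+1)) with hDdef
  -- limits from chaos
  have hE_lim : Tendsto E atTop (𝓝 m) := by
    have h := hchaos 1 (fun _ => g)
    simp only [Fin.prod_univ_one] at h
    have h' : Tendsto (fun n => E (1 + n)) atTop (𝓝 m) := by
      refine h.congr fun n => ?_
      show ∫ s, g (s (Fin.castLE (by omega) (0 : Fin 1))) ∂(ρ (1+n+1)) = _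
      have : (Fin.castLE (show 1 ≤ 1+n+1 by omega) (0 : Fin 1)) = (0 : Fin (1+n+1)) := by
        ext; simp
      rw [this]
    simp only [Nat.add_comm 1] at h'
    exact (tendsto_add_atTop_iff_nat 1).mp h'
  have hC_lim : Tendsto C atTop (𝓝 (m ^ 2)) := by
    have h := hchaos 2 ![g, g]
    simp only [Fin.prod_univ_two, Matrix.cons_val_zero, Matrix.cons_val_one,
      Matrix.head_cons] at h
    have h' : Tendsto (fun n => C (2 + n)) atTop (𝓝 (m * m)) := by
      refine h.congr fun n => ?_
      show ∫ s, g (s (Fin.castLE (by omega) (0 : Fin 2))) *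
          g (s (Fin.castLE (by omega) (1 : Fin 2))) ∂(ρ (2+n+1)) = _
      have h0 : (Fin.castLE (show 2 ≤ 2+n+1 by omega) (0 : Fin 2)) = (0 : Fin (2+n+1)) := by
        ext; simp
      have h1 : (Fin.castLE (show 2 ≤ 2+n+1 by omega) (1 : Fin 2)) = (1 : Fin (2+n+1)) := by
        ext; simp [Fin.val_one, Nat.mod_eq_of_lt]
      rw [h0, h1]
    simp only [Nat.add_comm 2] at h'
    rw [show m ^ 2 = m * m by ring]
    exact (tendsto_add_atTop_iff_nat 2).mp h'
  -- per-n exact identity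
  have hVeq : ∀ n : ℕ,
      (∫ s, |(1 / ((n : ℝ) + 1)) * ∑ i : Fin (n + 1), g (s i) - m| ^ 2 ∂(ρ (n+1)))
      = ((1/((n:ℝ)+1)) * D n + ((n:ℝ) * (1/((n:ℝ)+1))) * C n - 2 * m * E n) + m ^ 2 := by
    intro n
    haveI := hprob (n+1)
    set c : ℝ := 1/((n:ℝ)+1) with hc
    set μ := ρ (n+1) with hμ
    have hne : ((n:ℝ)+1) ≠ 0 := by positivity
    let G : Fin (n+1) → ((Fin (n+1) → S) →ᵇ ℝ) :=
      fun i => g.compContinuous ⟨fun s => s i, continuous_apply i⟩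
    have hGint : ∀ i, Integrable (fun s => g (s i)) μ := fun i => (G i).integrable μ
    have hGGint : ∀ i j, Integrable (fun s => g (s i) * g (s j)) μ :=
      fun i j => ((G i) * (G j)).integrable μ
    have Eeq : ∀ i : Fin (n+1), ∫ s, g (s i) ∂μ = E n := by
      intro i
      have h := perm_integral (hsym (n+1)) (Equiv.swap 0 i) (G 0)
      simpa [G, Function.comp, Equiv.swap_apply_left] using h
    have key : ∀ i j : Fin (n+1),
        ∫ s, g (s i) * g (s j) ∂μ = if i = j then D n else C n := by
      intro i j
      split_ifs with hij
      · subst hij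
        have h := perm_integral (hsym (n+1)) (Equiv.swap 0 i) ((G 0) * (G 0))
        simpa [G, Function.comp, Equiv.swap_apply_left] using h
      · have hpos : 0 < n := Nat.pos_of_ne_zero fun h0 => hij (by
          subst h0
          exact Subsingleton.elim (α := Fin 1) i j)
        have h01 : (0 : Fin (n+1)) ≠ 1 := by
          intro h
          have h2 := congrArg Fin.val h
          have hv : ((1 : Fin (n+1)) : ℕ) = 1 := by
            show 1 % (n+1) = 1
            exact Nat.mod_eq_of_lt (by omega)
          rw [Fin.val_zero, hv] at h2
          exact absurd h2 (by omega)
        set σ : Equiv.Perm (Fin (n+1)) := Equiv.swap 0 i with hσ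
        have hj' : σ.symm j ≠ 0 := by
          intro h
          apply hij
          have := congrArg σ h
          rw [Equiv.apply_symm_apply] at this
          rw [this, hσ, Equiv.swap_apply_left]
        set τ : Equiv.Perm (Fin (n+1)) := Equiv.swap 1 (σ.symm j) with hτ
        set π : Equiv.Perm (Fin (n+1)) := τ.trans σ with hπ
        have hπ0 : π 0 = i := by
          show σ (τ 0) = i
          rw [hτ, Equiv.swap_apply_of_ne_of_ne h01 (Ne.symm hj'),
            hσ, Equiv.swap_apply_left]
        have hπ1 : π 1 = j := by
          show σ (τ 1) = j
          rw [hτ, Equiv.swap_apply_left, Equiv.apply_symm_apply]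
        have h := perm_integral (hsym (n+1)) π ((G 0) * (G 1))
        have h' : ∫ s : Fin (n+1) → S, g (s (π 0)) * g (s (π 1)) ∂μ
            = ∫ s : Fin (n+1) → S, g (s 0) * g (s 1) ∂μ := by
          simpa [G, Function.comp] using h
        rw [hπ0, hπ1] at h'
        exact h'
    -- pointwise expansion of the square
    have hpt : ∀ s : Fin (n+1) → S, |c * ∑ i, g (s i) - m| ^ 2
        = (∑ i : Fin (n+1), ∑ j : Fin (n+1), c^2 * (g (s i) * g (s j)))
          - (∑ i : Fin (n+1), (2*c*m) * g (s i)) + m^2 := by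
      intro s
      have h1 : (∑ i : Fin (n+1), ∑ j : Fin (n+1), c^2 * (g (s i) * g (s j)))
          = c^2 * ((∑ i : Fin (n+1), g (s i)) * (∑ j : Fin (n+1), g (s j))) := by
        rw [Finset.sum_mul_sum]
        simp [Finset.mul_sum]
      have h2 : (∑ i : Fin (n+1), (2*c*m) * g (s i)) = (2*c*m) * ∑ i : Fin (n+1), g (s i) := by
        rw [Finset.mul_sum]
      rw [h1, h2, sq_abs]; ring
    have hint2 : Integrable
        (fun s => ∑ i : Fin (n+1), ∑ j : Fin (n+1), c^2 * (g (s i) * g (s j))) μ := by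
      apply integrable_finset_sum; intro i _
      apply integrable_finset_sum; intro j _
      exact (hGGint i j).const_mul _
    have hint1 : Integrable (fun s => ∑ i : Fin (n+1), (2*c*m) * g (s i)) μ := by
      apply integrable_finset_sum; intro i _
      exact (hGint i).const_mul _
    have I2 : ∫ s, (∑ i : Fin (n+1), ∑ j : Fin (n+1), c^2 * (g (s i) * g (s j))) ∂μ
        = ((n:ℝ)+1) * (c^2 * (D n + (n:ℝ) * C n)) := by
      rw [integral_finset_sum _ (fun i _ => integrable_finset_sum _ fun j _ =>
        (hGGint i j).const_mul _)]
      have hinner : ∀ i : Fin (n+1),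
          ∫ s, (∑ j : Fin (n+1), c^2 * (g (s i) * g (s j))) ∂μ
          = c^2 * (D n + (n:ℝ) * C n) := by
        intro i
        rw [integral_finset_sum _ (fun j _ => (hGGint i j).const_mul _)]
        have : ∀ j : Fin (n+1), ∫ s, c^2 * (g (s i) * g (s j)) ∂μ
            = c^2 * (if i = j then D n else C n) := by
          intro j; rw [integral_const_mul, key i j]
        rw [Finset.sum_congr rfl fun j _ => this j, ← Finset.mul_sum]
        congr 1
        have : ∀ j : Fin (n+1), (if i = j then D n else C n)
            = C n + (if i = j then D n - C n else 0) := by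
          intro j; split_ifs <;> ring
        rw [Finset.sum_congr rfl fun j _ => this j, Finset.sum_add_distrib,
          Finset.sum_const, Finset.sum_ite_eq]
        simp only [Finset.card_univ, Fintype.card_fin, nsmul_eq_mul, Finset.mem_univ,
          if_true]
        push_cast
        ring
      rw [Finset.sum_congr rfl fun i _ => hinner i, Finset.sum_const]
      simp only [Finset.card_univ, Fintype.card_fin, nsmul_eq_mul]
      push_cast
      ring
    have I1 : ∫ s, (∑ i : Fin (n+1), (2*c*m) * g (s i)) ∂μ
        = ((n:ℝ)+1) * ((2*c*m) * E n) := by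
      rw [integral_finset_sum _ (fun i _ => (hGint i).const_mul _)]
      have : ∀ i : Fin (n+1), ∫ s, (2*c*m) * g (s i) ∂μ = (2*c*m) * E n := by
        intro i; rw [integral_const_mul, Eeq i]
      rw [Finset.sum_congr rfl fun i _ => this i, Finset.sum_const]
      simp only [Finset.card_univ, Fintype.card_fin, nsmul_eq_mul]
      push_cast
      ring
    calc ∫ s, |c * ∑ i : Fin (n+1), g (s i) - m| ^ 2 ∂μ
        = ∫ s, ((∑ i : Fin (n+1), ∑ j : Fin (n+1), c^2 * (g (s i) * g (s j)))
            - (∑ i : Fin (n+1), (2*c*m) * g (s i)) + m^2) ∂μ := by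
          exact integral_congr_ae (Filter.Eventually.of_forall hpt)
      _ = ((n:ℝ)+1) * (c^2 * (D n + (n:ℝ) * C n)) - ((n:ℝ)+1) * ((2*c*m) * E n) + m^2 := by
          have hsub : Integrable (fun s => (∑ i : Fin (n+1), ∑ j : Fin (n+1),
              c^2 * (g (s i) * g (s j))) - (∑ i : Fin (n+1), (2*c*m) * g (s i))) μ :=
            hint2.sub hint1
          rw [integral_add hsub (integrable_const _),
            integral_sub hint2 hint1, I2, I1, integral_const]
          simp
      _ = (c * D n + ((n:ℝ) * c) * C n - 2 * m * E n) + m ^ 2 := by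
          rw [hc]; field_simp
  -- assemble the limit
  have hc0 : Tendsto (fun n : ℕ => 1/((n:ℝ)+1)) atTop (𝓝 0) :=
    tendsto_one_div_add_atTop_nhds_zero_nat
  have hDbd : ∀ n, |D n| ≤ ‖g‖ * ‖g‖ := by
    intro n
    haveI := hprob (n+1)
    rw [← Real.norm_eq_abs]
    calc ‖D n‖ ≤ (‖g‖ * ‖g‖) * ((ρ (n+1)) Set.univ).toReal := by
          apply norm_integral_le_of_norm_le_const
          filter_upwards with s
          rw [Real.norm_eq_abs, abs_mul]
          exact mul_le_mul (g.norm_coe_le_norm _) (g.norm_coe_le_norm _)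
            (abs_nonneg _) (norm_nonneg _)
      _ = ‖g‖ * ‖g‖ := by simp
  have h1 : Tendsto (fun n : ℕ => (1/((n:ℝ)+1)) * D n) atTop (𝓝 0) := by
    refine squeeze_zero_norm (f := fun n : ℕ => (1/((n:ℝ)+1)) * D n)
      (a := fun n : ℕ => (1/((n:ℝ)+1)) * (‖g‖ * ‖g‖)) ?_ ?_
    · intro n
      rw [norm_mul, Real.norm_eq_abs, Real.norm_eq_abs, abs_of_nonneg (by positivity)]
      exact mul_le_mul_of_nonneg_left (hDbd n) (by positivity)
    · simpa using hc0.mul_const (‖g‖ * ‖g‖)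
  have hnc : Tendsto (fun n : ℕ => (n:ℝ) * (1/((n:ℝ)+1))) atTop (𝓝 1) := by
    have heq : ∀ n : ℕ, (n:ℝ) * (1/((n:ℝ)+1)) = 1 - 1/((n:ℝ)+1) := by
      intro n
      have hne : ((n:ℝ)+1) ≠ 0 := by positivity
      field_simp
      ring
    rw [tendsto_congr heq]
    simpa using tendsto_const_nhds.sub hc0
  have h2 : Tendsto (fun n : ℕ => ((n:ℝ)*(1/((n:ℝ)+1))) * C n) atTop (𝓝 (1 * m^2)) :=
    hnc.mul hC_lim
  have h3 : Tendsto (fun n : ℕ => 2 * m * E n) atTop (𝓝 (2 * m * m)) :=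
    hE_lim.const_mul (2*m)
  have hfin := (((h1.add h2).sub h3).add (tendsto_const_nhds (x := m^2)))
  rw [show (0 + 1*m^2 - 2*m*m + m^2 : ℝ) = 0 by ring] at hfin
  exact (tendsto_congr hVeq).mpr hfin
end

section
/- Let S be a separable metric space, let ρ_n be symmetric laws on S^n, and let ρ ∈ P(S). If Kac's chaos condition holds merely for k = 1 and k = 2 (i.e., the first and second marginals converge appropriately for products of bounded continuous functions), then the laws ρ_n ∘ ε_n^{-1} of the empirical measures converge weakly in P(P(S)) to δ_ρ. -/
open MeasureTheory Filter Topology BoundedContinuousFunction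
open scoped ENNReal NNReal

/-! ### Auxiliary lemmas -/

section Aux

lemma avg_int' {α S : Type*} [Fintype α] [Nonempty α] [MetricSpace S] [MeasurableSpace S]
    [OpensMeasurableSpace S] (g : S →ᵇ ℝ) (s : α → S) :
    ∫ x, g x ∂(avgDirac s) = ((Fintype.card α : ℝ))⁻¹ * ∑ a : α, g (s a) := by
  unfold avgDirac
  rw [integral_smul_measure, integral_finset_sum_measure (fun i _ => g.integrable _)]
  simp [integral_dirac, ENNReal.toReal_inv]

lemma emp_int' {S : Type*} [MetricSpace S] [MeasurableSpace S] [OpensMeasurableSpace S]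
    {n : ℕ} [NeZero n] (g : S →ᵇ ℝ) (s : Fin n → S) :
    ∫ x, g x ∂((empiricalPM n s : ProbabilityMeasure S) : Measure S)
      = ((n : ℕ) : ℝ)⁻¹ * ∑ i : Fin n, g (s i) := by
  haveI : Nonempty (Fin n) := Fin.pos_iff_nonempty.mp (Nat.pos_of_ne_zero (NeZero.ne n))
  have := avg_int' g s
  simpa [empiricalPM, empiricalMeasure] using this

lemma empiricalPM_continuous' {S : Type*} [MetricSpace S] [MeasurableSpace S]
    [OpensMeasurableSpace S] (n : ℕ) [NeZero n] :
    Continuous (empiricalPM (S := S) n) := by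
  rw [continuous_iff_continuousAt]
  intro s₀
  unfold ContinuousAt
  rw [ProbabilityMeasure.tendsto_iff_forall_integral_tendsto]
  intro g
  simp only [emp_int']
  exact (continuous_const.mul (continuous_finset_sum _ fun i _ =>
    g.continuous.comp (continuous_apply i))).tendsto s₀

/-- The evaluation of a probability measure against all bounded continuous `ℝ≥0`-valued
functions. -/
noncomputable def evalG (S : Type*) [MeasurableSpace S] [TopologicalSpace S]
    (μ : ProbabilityMeasure S) : (S →ᵇ ℝ≥0) → ℝ≥0 :=
  fun f => μ.toFiniteMeasure.testAgainstNN f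

lemma evalG_inducing (S : Type*) [MeasurableSpace S] [TopologicalSpace S]
    [OpensMeasurableSpace S] : IsInducing (evalG S) := by
  have i1 : IsInducing (ProbabilityMeasure.toFiniteMeasure :
      ProbabilityMeasure S → FiniteMeasure S) := ⟨rfl⟩
  have i2 : IsInducing (FiniteMeasure.toWeakDualBCNN :
      FiniteMeasure S → WeakDual ℝ≥0 (S →ᵇ ℝ≥0)) := ⟨rfl⟩
  have i3 : IsInducing (fun (v : WeakDual ℝ≥0 (S →ᵇ ℝ≥0)) (f : S →ᵇ ℝ≥0) => v f) := ⟨rfl⟩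
  exact (i3.comp (i2.comp i1))

/-- Any neighbourhood of a probability measure in the topology of weak convergence contains
a basic neighbourhood determined by finitely many test functions. -/
lemma nbhd_basic {S : Type*} [MeasurableSpace S] [TopologicalSpace S] [OpensMeasurableSpace S]
    (p : ProbabilityMeasure S) {U : Set (ProbabilityMeasure S)} (hU : U ∈ 𝓝 p) :
    ∃ (F : Finset (S →ᵇ ℝ≥0)) (δ : (S →ᵇ ℝ≥0) → ℝ), (∀ f, 0 < δ f) ∧
      ∀ μ : ProbabilityMeasure S,
        (∀ f ∈ F, dist (evalG S μ f) (evalG S p f) < δ f) → μ ∈ U := by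
  rw [(evalG_inducing S).nhds_eq_comap, Filter.mem_comap] at hU
  obtain ⟨V, hV, hVU⟩ := hU
  rw [nhds_pi, Filter.mem_pi] at hV
  obtain ⟨I, hIfin, t, ht, hsub⟩ := hV
  have hδ : ∀ f : S →ᵇ ℝ≥0, ∃ d, 0 < d ∧ Metric.ball (evalG S p f) d ⊆ t f := by
    intro f
    obtain ⟨d, hd, hball⟩ := Metric.mem_nhds_iff.mp (ht f)
    exact ⟨d, hd, hball⟩
  choose δ hδpos hδball using hδ
  refine ⟨hIfin.toFinset, δ, hδpos, fun μ hμ => ?_⟩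
  apply hVU
  apply hsub
  intro f hf
  exact hδball f (hμ f (hIfin.mem_toFinset.mpr hf))

/-- The real-valued bounded continuous function associated to an `ℝ≥0`-valued one. -/
noncomputable def nnrealBCF {S : Type*} [TopologicalSpace S] (f : S →ᵇ ℝ≥0) : S →ᵇ ℝ :=
  f.comp _ ((show Isometry ((↑) : ℝ≥0 → ℝ) from fun _ _ => rfl).lipschitz)

lemma evalG_coe {S : Type*} [MeasurableSpace S] [TopologicalSpace S] [OpensMeasurableSpace S]
    (μ : ProbabilityMeasure S) (f : S →ᵇ ℝ≥0) :
    (evalG S μ f : ℝ) = ∫ x, nnrealBCF f x ∂(μ : Measure S) := by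
  have : ∫ x, nnrealBCF f x ∂(μ : Measure S) = ∫ x, ((f x : ℝ)) ∂(μ : Measure S) := rfl
  rw [this, ← BoundedContinuousFunction.toReal_lintegral_coe_eq_integral f (μ : Measure S)]
  rfl

lemma evalG_dist {S : Type*} [MeasurableSpace S] [TopologicalSpace S] [OpensMeasurableSpace S]
    (μ ν : ProbabilityMeasure S) (f : S →ᵇ ℝ≥0) :
    dist (evalG S μ f) (evalG S ν f)
      = |(∫ x, nnrealBCF f x ∂(μ : Measure S)) - ∫ x, nnrealBCF f x ∂(ν : Measure S)| := by
  rw [NNReal.dist_eq, evalG_coe, evalG_coe]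

section Marginals
variable {S : Type*} [MetricSpace S] [TopologicalSpace.SeparableSpace S]
  [MeasurableSpace S] [BorelSpace S]

lemma integral_perm {N : ℕ} {ρ : Measure (Fin N → S)} (hsym : IsSymmetricLaw ρ)
    (π : Equiv.Perm (Fin N)) (g : (Fin N → S) →ᵇ ℝ) :
    ∫ s, g (s ∘ π) ∂ρ = ∫ s, g s ∂ρ := by
  haveI : SecondCountableTopology S := UniformSpace.secondCountable_of_separable S
  have hT : Measurable (fun s : Fin N → S => s ∘ π) :=
    measurable_pi_lambda _ fun i => measurable_pi_apply _
  calc ∫ s, g (s ∘ π) ∂ρ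
      = ∫ s, g s ∂(Measure.map (fun s : Fin N → S => s ∘ π) ρ) :=
        (integral_map hT.aemeasurable g.continuous.measurable.aestronglyMeasurable).symm
    _ = ∫ s, g s ∂ρ := by rw [hsym π]

/-- evaluation at coordinate `i` as a continuous map -/
def evalCM {N : ℕ} (i : Fin N) : C(Fin N → S, S) := ⟨fun s => s i, continuous_apply i⟩

lemma marginal_one {n : ℕ} {ρ : Measure (Fin (n+1) → S)} (hsym : IsSymmetricLaw ρ)
    (h : S →ᵇ ℝ) (i : Fin (n+1)) :
    ∫ s, h (s i) ∂ρ = ∫ s, h (s 0) ∂ρ := by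
  have := integral_perm hsym (Equiv.swap 0 i) (h.compContinuous (evalCM 0))
  simpa [evalCM, Equiv.swap_apply_left] using this

lemma marginal_two {n : ℕ} {ρ : Measure (Fin (n+1) → S)} (hsym : IsSymmetricLaw ρ)
    (h₁ h₂ : S →ᵇ ℝ) {i j : Fin (n+1)} (hij : i ≠ j) :
    ∫ s, h₁ (s i) * h₂ (s j) ∂ρ = ∫ s, h₁ (s 0) * h₂ (s 1) ∂ρ := by
  have hval : (i : ℕ) ≠ (j : ℕ) := Fin.val_ne_of_ne hij
  have hi := i.isLt
  have hj := j.isLt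
  have hN : 1 < n + 1 := by omega
  have h01 : (0 : Fin (n+1)) ≠ 1 := by
    apply Fin.ne_of_val_ne
    simp [Fin.val_one', Nat.mod_eq_of_lt hN]
  set j'' := Equiv.swap (0 : Fin (n+1)) i j with hj''def
  have hj''0 : j'' ≠ 0 := by
    intro h
    have h2 : Equiv.swap (0 : Fin (n+1)) i j'' = j := Equiv.swap_apply_self _ _ _
    rw [h, Equiv.swap_apply_left] at h2
    exact hij h2
  set π : Equiv.Perm (Fin (n+1)) := (Equiv.swap 1 j'').trans (Equiv.swap 0 i) with hπdef
  have hπ0 : π 0 = i := by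
    show Equiv.swap (0 : Fin (n+1)) i (Equiv.swap 1 j'' 0) = i
    rw [Equiv.swap_apply_of_ne_of_ne h01 (Ne.symm hj''0), Equiv.swap_apply_left]
  have hπ1 : π 1 = j := by
    show Equiv.swap (0 : Fin (n+1)) i (Equiv.swap 1 j'' 1) = j
    rw [Equiv.swap_apply_left, hj''def, Equiv.swap_apply_self]
  have key := integral_perm hsym π
    ((h₁.compContinuous (evalCM 0)) * (h₂.compContinuous (evalCM 1)))
  simpa [evalCM, hπ0, hπ1] using key

/-- The second moment of the deviation of the empirical average of a bounded continuous test
function from the limit value tends to zero. -/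
lemma var_tendsto (ρ : ∀ n, Measure (Fin n → S)) (hprob : ∀ n, IsProbabilityMeasure (ρ n))
    (hsym : ∀ n, IsSymmetricLaw (ρ n))
    (p : ProbabilityMeasure S)
    (h1 : ∀ φ : S →ᵇ ℝ,
      Tendsto (fun n => ∫ s, φ (s 0) ∂ (ρ (n + 1))) atTop (𝓝 (∫ x, φ x ∂ (p : Measure S))))
    (h2 : ∀ φ₁ φ₂ : S →ᵇ ℝ,
      Tendsto (fun n => ∫ s, φ₁ (s 0) * φ₂ (s 1) ∂ (ρ (n + 2))) atTop
        (𝓝 ((∫ x, φ₁ x ∂ (p : Measure S)) * ∫ x, φ₂ x ∂ (p : Measure S))))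
    (φ : S →ᵇ ℝ) :
    Tendsto (fun n => ∫ s, (((n + 1 : ℕ) : ℝ)⁻¹ * (∑ i : Fin (n+1), φ (s i))
        - ∫ x, φ x ∂(p : Measure S))^2 ∂(ρ (n+1))) atTop (𝓝 0) := by
  haveI : SecondCountableTopology S := UniformSpace.secondCountable_of_separable S
  set c : ℝ := ∫ x, φ x ∂(p : Measure S) with hc
  set A : ℕ → ℝ := fun n => ∫ s : Fin (n+1) → S, φ (s 0) * φ (s 0) ∂(ρ (n+1)) with hA
  set Q : ℕ → ℝ := fun n => ∫ s : Fin (n+1) → S, φ (s 0) ∂(ρ (n+1)) with hQ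
  set P : ℕ → ℝ := fun n => ∫ s : Fin (n+1) → S, φ (s 0) * φ (s 1) ∂(ρ (n+1)) with hP
  have key : ∀ n : ℕ,
      ∫ s, (((n + 1 : ℕ) : ℝ)⁻¹ * (∑ i : Fin (n+1), φ (s i)) - c)^2 ∂(ρ (n+1))
        = ((n+1:ℕ):ℝ)⁻¹ * A n + (1 - ((n+1:ℕ):ℝ)⁻¹) * P n - 2*c*Q n + c^2 := by
    intro n
    haveI := hprob (n+1)
    set ν : ℝ := ((n + 1 : ℕ) : ℝ) with hν
    have hνpos : (0:ℝ) < ν := by positivity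
    have int1 : ∀ i : Fin (n+1), Integrable (fun s : Fin (n+1) → S => φ (s i)) (ρ (n+1)) := by
      intro i
      exact (φ.compContinuous (evalCM i)).integrable (ρ (n+1))
    have int2 : ∀ i j : Fin (n+1),
        Integrable (fun s : Fin (n+1) → S => φ (s i) * φ (s j)) (ρ (n+1)) := by
      intro i j
      exact
        ((φ.compContinuous (evalCM i)) * (φ.compContinuous (evalCM j))).integrable (ρ (n+1))
    have intLin : Integrable (fun s : Fin (n+1) → S => ∑ i : Fin (n+1), φ (s i)) (ρ (n+1)) :=
      integrable_finset_sum _ (fun i _ => int1 i)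
    have intDouble : Integrable
        (fun s : Fin (n+1) → S => ∑ i : Fin (n+1), ∑ j : Fin (n+1), φ (s i) * φ (s j))
        (ρ (n+1)) :=
      integrable_finset_sum _ (fun i _ => integrable_finset_sum _ (fun j _ => int2 i j))
    have hexp : ∀ s : Fin (n+1) → S,
        (ν⁻¹ * (∑ i : Fin (n+1), φ (s i)) - c)^2
          = ν⁻¹*ν⁻¹ * (∑ i : Fin (n+1), ∑ j : Fin (n+1), φ (s i) * φ (s j))
            - 2*c*ν⁻¹ * (∑ i : Fin (n+1), φ (s i)) + c^2 := by
      intro s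
      rw [← Finset.sum_mul_sum]
      ring
    have diag : ∀ i : Fin (n+1), ∫ s, φ (s i) * φ (s i) ∂(ρ (n+1)) = A n := by
      intro i
      simpa using marginal_one (hsym (n+1)) (φ * φ) i
    have hsum1 : ∫ s, (∑ i : Fin (n+1), φ (s i)) ∂(ρ (n+1)) = ν * Q n := by
      rw [integral_finset_sum _ (fun i _ => int1 i),
        Finset.sum_congr rfl (fun i _ => marginal_one (hsym (n+1)) φ i)]
      simp [hν, mul_comm]
      exact Or.inl rfl
    have hsum2 : ∫ s, (∑ i : Fin (n+1), ∑ j : Fin (n+1), φ (s i) * φ (s j)) ∂(ρ (n+1))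
        = ν * (A n + (ν - 1) * P n) := by
      rw [integral_finset_sum _ (fun i _ => integrable_finset_sum _ (fun j _ => int2 i j))]
      have inner : ∀ i : Fin (n+1),
          ∫ s, (∑ j : Fin (n+1), φ (s i) * φ (s j)) ∂(ρ (n+1)) = A n + (ν - 1) * P n := by
        intro i
        rw [integral_finset_sum _ (fun j _ => int2 i j)]
        have term : ∀ j : Fin (n+1), ∫ s, φ (s i) * φ (s j) ∂(ρ (n+1))
            = P n + (if i = j then A n - P n else 0) := by
          intro j
          by_cases hij : i = j
          · simp [hij, diag j]
          · simp only [hij, if_false, add_zero]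
            exact marginal_two (hsym (n+1)) φ φ hij
        rw [Finset.sum_congr rfl (fun j _ => term j), Finset.sum_add_distrib,
          Finset.sum_ite_eq Finset.univ i (fun _ => A n - P n)]
        simp [hν]
        ring
      rw [Finset.sum_congr rfl (fun i _ => inner i)]
      simp [hν, mul_comm]
      ring
    simp only [hexp]
    have I1 : Integrable (fun s : Fin (n+1) → S =>
        ν⁻¹*ν⁻¹ * (∑ i : Fin (n+1), ∑ j : Fin (n+1), φ (s i) * φ (s j))
          - 2*c*ν⁻¹ * (∑ i : Fin (n+1), φ (s i))) (ρ (n+1)) :=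
      (intDouble.const_mul _).sub (intLin.const_mul _)
    rw [integral_add I1 (integrable_const _),
      integral_sub (intDouble.const_mul _) (intLin.const_mul _),
      integral_const_mul, integral_const_mul, integral_const, hsum1, hsum2]
    simp only [measure_univ, probReal_univ, ENNReal.toReal_one, smul_eq_mul, one_mul]
    field_simp
  refine Tendsto.congr (fun n => (key n).symm) ?_
  have hν0 : Tendsto (fun n : ℕ => ((n + 1 : ℕ) : ℝ)⁻¹) atTop (𝓝 0) := by
    have := tendsto_one_div_add_atTop_nhds_zero_nat (𝕜 := ℝ)
    simp only [one_div] at this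
    convert this using 2 with n
    push_cast
    ring
  have hAbd : ∀ n, ‖((n+1:ℕ):ℝ)⁻¹ * A n‖ ≤ ((n+1:ℕ):ℝ)⁻¹ * (‖φ‖ * ‖φ‖) := by
    intro n
    haveI := hprob (n+1)
    have hAn : ‖A n‖ ≤ ‖φ‖ * ‖φ‖ := by
      have := norm_integral_le_of_norm_le_const (μ := ρ (n+1))
        (f := fun s : Fin (n+1) → S => φ (s 0) * φ (s 0)) (C := ‖φ‖ * ‖φ‖) ?_
      · simpa [measure_univ] using this
      · filter_upwards with s
        calc ‖φ (s 0) * φ (s 0)‖ = ‖φ (s 0)‖ * ‖φ (s 0)‖ := by rw [norm_mul]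
          _ ≤ ‖φ‖ * ‖φ‖ := by gcongr <;> exact φ.norm_coe_le_norm _
    rw [norm_mul, norm_inv, Real.norm_natCast]
    gcongr
  have hAlim : Tendsto (fun n => ((n+1:ℕ):ℝ)⁻¹ * A n) atTop (𝓝 0) := by
    apply squeeze_zero_norm hAbd
    simpa using hν0.mul_const (‖φ‖ * ‖φ‖)
  have hPlim : Tendsto P atTop (𝓝 (c * c)) := by
    refine (tendsto_add_atTop_iff_nat 1).mp ?_
    exact h2 φ φ
  have hQlim : Tendsto Q atTop (𝓝 c) := h1 φ
  have final := ((hAlim.add ((((tendsto_const_nhds :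
      Tendsto (fun _ : ℕ => (1:ℝ)) atTop (𝓝 1))).sub hν0).mul hPlim)).sub
    (hQlim.const_mul (2*c))).add (tendsto_const_nhds : Tendsto (fun _ : ℕ => c^2) atTop (𝓝 (c^2)))
  convert final using 2
  ring

end Marginals

end Aux

/-- If Kac's condition holds for `k = 1` and `k = 2`, then the laws of the empirical measures
converge weakly in `P(P(S))` to the point mass at `p`. -/
theorem stmt3 {S : Type*} [MetricSpace S] [TopologicalSpace.SeparableSpace S]
    [MeasurableSpace S] [BorelSpace S]
    (ρ : ∀ n, Measure (Fin n → S)) (hprob : ∀ n, IsProbabilityMeasure (ρ n))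
    (hsym : ∀ n, IsSymmetricLaw (ρ n))
    (p : ProbabilityMeasure S)
    (h1 : ∀ φ : S →ᵇ ℝ,
      Tendsto (fun n => ∫ s, φ (s 0) ∂ (ρ (n + 1))) atTop (𝓝 (∫ x, φ x ∂ (p : Measure S))))
    (h2 : ∀ φ₁ φ₂ : S →ᵇ ℝ,
      Tendsto (fun n => ∫ s, φ₁ (s 0) * φ₂ (s 1) ∂ (ρ (n + 2))) atTop
        (𝓝 ((∫ x, φ₁ x ∂ (p : Measure S)) * ∫ x, φ₂ x ∂ (p : Measure S)))) :
    EmpLawTendsto ρ p := by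
  haveI : SecondCountableTopology S := UniformSpace.secondCountable_of_separable S
  intro Φ
  rw [Metric.tendsto_atTop]
  intro ε hε
  have hU : (Φ ⁻¹' Metric.ball (Φ p) (ε/2)) ∈ 𝓝 p :=
    Φ.continuous.continuousAt.preimage_mem_nhds (Metric.ball_mem_nhds _ (by positivity))
  obtain ⟨F, δ, hδpos, hF⟩ := nbhd_basic p hU
  set φf : (S →ᵇ ℝ≥0) → (S →ᵇ ℝ) := fun f => nnrealBCF f with hφf
  set cf : (S →ᵇ ℝ≥0) → ℝ := fun f => ∫ x, φf f x ∂(p : Measure S) with hcf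
  set coeff : (S →ᵇ ℝ≥0) → ℝ := fun f => 2*‖Φ‖*((δ f)⁻¹)^2 with hcoeffdef
  have hcoeff : ∀ f, 0 ≤ coeff f := fun f => by positivity
  set W : (S →ᵇ ℝ≥0) → ℕ → ℝ := fun f n =>
    ∫ s, (((n + 1 : ℕ) : ℝ)⁻¹ * (∑ i : Fin (n+1), φf f (s i)) - cf f)^2 ∂(ρ (n+1)) with hWdef
  have hW : Tendsto (fun n => ∑ f ∈ F, coeff f * W f n) atTop (𝓝 0) := by
    have h0 : Tendsto (fun n => ∑ f ∈ F, coeff f * W f n) atTop (𝓝 (∑ f ∈ F, coeff f * 0)) :=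
      tendsto_finset_sum F (fun f _ =>
        ((var_tendsto ρ hprob hsym p h1 h2 (φf f)).const_mul (coeff f)))
    simpa using h0
  have hhalf : ∀ᶠ n in atTop, (∑ f ∈ F, coeff f * W f n) < ε/2 :=
    hW.eventually_lt_const (by positivity)
  obtain ⟨N, hN⟩ := eventually_atTop.mp hhalf
  refine ⟨N, fun n hn => ?_⟩
  haveI := hprob (n+1)
  set D : (S →ᵇ ℝ≥0) → (Fin (n+1) → S) → ℝ := fun f s =>
    ((n + 1 : ℕ) : ℝ)⁻¹ * (∑ i : Fin (n+1), φf f (s i)) - cf f with hDdef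
  have hemp : ∀ (f : S →ᵇ ℝ≥0) (s : Fin (n+1) → S),
      ∫ x, φf f x ∂((empiricalPM (n+1) s : ProbabilityMeasure S) : Measure S) = D f s + cf f := by
    intro f s
    rw [emp_int' (φf f) s]
    simp [hDdef]
  -- pointwise bound
  have hpt : ∀ s : Fin (n+1) → S,
      |Φ (empiricalPM (n+1) s) - Φ p| ≤ ε/2 + ∑ f ∈ F, coeff f * (D f s)^2 := by
    intro s
    have hsumnn : 0 ≤ ∑ f ∈ F, coeff f * (D f s)^2 :=
      Finset.sum_nonneg fun f _ => mul_nonneg (hcoeff f) (sq_nonneg _)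
    by_cases hgood : ∀ f ∈ F, |D f s| < δ f
    · have hmem : empiricalPM (n+1) s ∈ Φ ⁻¹' Metric.ball (Φ p) (ε/2) := by
        apply hF
        intro f hf
        rw [evalG_dist]
        have : (∫ x, nnrealBCF f x ∂((empiricalPM (n+1) s : ProbabilityMeasure S) : Measure S))
            - ∫ x, nnrealBCF f x ∂(p : Measure S) = D f s := by
          have h1 := hemp f s
          simp only [hφf] at h1
          rw [h1]
          simp [hcf, hφf]
        rw [this]
        exact hgood f hf
      have hlt : |Φ (empiricalPM (n+1) s) - Φ p| < ε/2 := by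
        simpa [Metric.mem_ball, Real.dist_eq] using hmem
      linarith
    · push_neg at hgood
      obtain ⟨f₀, hf₀F, hf₀⟩ := hgood
      have hδ0 := hδpos f₀
      have hone : (1:ℝ) ≤ ((δ f₀)⁻¹)^2 * (D f₀ s)^2 := by
        have habs : (δ f₀)^2 ≤ (D f₀ s)^2 := by
          nlinarith [abs_nonneg (D f₀ s), sq_abs (D f₀ s)]
        have hinvpos : (0:ℝ) < ((δ f₀)^2)⁻¹ := by positivity
        calc (1:ℝ) = ((δ f₀)^2)⁻¹ * (δ f₀)^2 := by
              rw [inv_mul_cancel₀ (by positivity)]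
          _ ≤ ((δ f₀)^2)⁻¹ * (D f₀ s)^2 := by gcongr
          _ = ((δ f₀)⁻¹)^2 * (D f₀ s)^2 := by rw [inv_pow]
      have hterm : 2*‖Φ‖ ≤ coeff f₀ * (D f₀ s)^2 := by
        calc 2*‖Φ‖ = 2*‖Φ‖*1 := by ring
          _ ≤ 2*‖Φ‖ * (((δ f₀)⁻¹)^2 * (D f₀ s)^2) := by
              have h2 : (0:ℝ) ≤ 2*‖Φ‖ := by positivity
              exact mul_le_mul_of_nonneg_left hone h2
          _ = coeff f₀ * (D f₀ s)^2 := by rw [hcoeffdef]; ring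
      have hLHS : |Φ (empiricalPM (n+1) s) - Φ p| ≤ 2*‖Φ‖ := by
        have hn1 : |Φ (empiricalPM (n+1) s)| ≤ ‖Φ‖ := by
          simpa [Real.norm_eq_abs] using Φ.norm_coe_le_norm (empiricalPM (n+1) s)
        have hn2 : |Φ p| ≤ ‖Φ‖ := by
          simpa [Real.norm_eq_abs] using Φ.norm_coe_le_norm p
        calc |Φ (empiricalPM (n+1) s) - Φ p| ≤ |Φ (empiricalPM (n+1) s)| + |Φ p| := abs_sub _ _
          _ ≤ 2*‖Φ‖ := by linarith
      have hsum_ge : coeff f₀ * (D f₀ s)^2 ≤ ∑ f ∈ F, coeff f * (D f s)^2 :=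
        Finset.single_le_sum (f := fun f => coeff f * (D f s)^2)
          (fun f _ => mul_nonneg (hcoeff f) (sq_nonneg _)) hf₀F
      linarith
  -- integrability
  have hcont := empiricalPM_continuous' (S := S) (n+1)
  have intΦ : Integrable (fun s : Fin (n+1) → S => Φ (empiricalPM (n+1) s)) (ρ (n+1)) := by
    exact (Φ.compContinuous ⟨empiricalPM (n+1), hcont⟩).integrable (ρ (n+1))
  have intDsq : ∀ f : S →ᵇ ℝ≥0,
      Integrable (fun s : Fin (n+1) → S => (D f s)^2) (ρ (n+1)) := by
    intro f
    set G : (Fin (n+1) → S) →ᵇ ℝ :=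
      ((n + 1 : ℕ) : ℝ)⁻¹ • (∑ i : Fin (n+1), (φf f).compContinuous (evalCM i))
        - BoundedContinuousFunction.const _ (cf f) with hGdef
    have hGs : ∀ s, G s = D f s := by
      intro s
      simp [hGdef, hDdef, evalCM, Finset.sum_apply]
    have hint := (G * G).integrable (ρ (n+1))
    apply hint.congr
    filter_upwards with s
    simp [hGs s, pow_two]
  have intB : Integrable (fun s : Fin (n+1) → S =>
      ε/2 + ∑ f ∈ F, coeff f * (D f s)^2) (ρ (n+1)) :=
    (integrable_const _).add (integrable_finset_sum _ fun f _ => (intDsq f).const_mul _)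
  -- final chain
  rw [Real.dist_eq]
  have heq : (∫ s, Φ (empiricalPM (n+1) s) ∂(ρ (n+1))) - Φ p
      = ∫ s, (Φ (empiricalPM (n+1) s) - Φ p) ∂(ρ (n+1)) := by
    rw [integral_sub intΦ (integrable_const _), integral_const]
    simp [measure_univ]
  rw [heq]
  have hbound : |∫ s, (Φ (empiricalPM (n+1) s) - Φ p) ∂(ρ (n+1))|
      ≤ ∫ s, (ε/2 + ∑ f ∈ F, coeff f * (D f s)^2) ∂(ρ (n+1)) := by
    have hev : ∀ᵐ s ∂(ρ (n+1)), ‖Φ (empiricalPM (n+1) s) - Φ p‖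
        ≤ ε/2 + ∑ f ∈ F, coeff f * (D f s)^2 :=
      Filter.Eventually.of_forall fun s => by simpa [Real.norm_eq_abs] using hpt s
    have := norm_integral_le_of_norm_le intB hev
    simpa [Real.norm_eq_abs] using this
  have hBval : ∫ s, (ε/2 + ∑ f ∈ F, coeff f * (D f s)^2) ∂(ρ (n+1))
      = ε/2 + ∑ f ∈ F, coeff f * W f n := by
    rw [integral_add (integrable_const _)
      (integrable_finset_sum _ fun f _ => (intDsq f).const_mul _), integral_const,
      integral_finset_sum _ (fun f _ => (intDsq f).const_mul _)]
    simp only [measure_univ, probReal_univ, ENNReal.toReal_one, smul_eq_mul, one_mul]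
    congr 1
    refine Finset.sum_congr rfl fun f _ => ?_
    rw [integral_const_mul]
  have hlast := hN n hn
  rw [hBval] at hbound
  calc |∫ s, (Φ (empiricalPM (n+1) s) - Φ p) ∂(ρ (n+1))|
      ≤ ε/2 + ∑ f ∈ F, coeff f * W f n := hbound
    _ < ε/2 + ε/2 := by linarith
    _ = ε := by ring
end

section
/- Let S be a separable metric space, ρ_n symmetric laws on S^n, and ρ ∈ P(S). If the empirical-measure laws ρ_n ∘ ε_n^{-1} converge weakly in P(P(S)) to δ_ρ, then {ρ_n} is ρ-chaotic: for every k and all bounded continuous φ_1,...,φ_k on S, ∫_{S^n} φ_1(s_1)···φ_k(s_k) dρ_n → ∏_i ∫ φ_i dρ. -/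
open MeasureTheory Filter Topology BoundedContinuousFunction
open scoped ENNReal NNReal

/-! ### Auxiliary lemmas -/

set_option linter.unusedSectionVars false

lemma integral_avgDirac {α : Type*} [Fintype α] {S : Type*} [TopologicalSpace S]
    [MeasurableSpace S] [OpensMeasurableSpace S]
    [MeasurableSingletonClass S] (s : α → S) (φ : S →ᵇ ℝ) :
    ∫ x, φ x ∂(avgDirac s) = ((Fintype.card α : ℝ))⁻¹ * ∑ j, φ (s j) := by
  rw [avgDirac, integral_smul_measure, integral_finset_sum_measure]
  · simp [integral_dirac, ENNReal.toReal_inv, smul_eq_mul]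
  · intro i _
    exact φ.integrable _

lemma exists_perm_extend' {k m : ℕ} (hk : k ≤ m) (g : Fin k → Fin m)
    (hg : Function.Injective g) :
    ∃ π : Equiv.Perm (Fin m), ∀ i, π (Fin.castLE hk i) = g i := by
  classical
  set c : Fin k → Fin m := Fin.castLE hk with hc_def
  have hc : Function.Injective c := Fin.castLE_injective hk
  let e : {x // x ∈ Set.range c} ≃ {x // x ∈ Set.range g} :=
    (Equiv.ofInjective c hc).symm.trans (Equiv.ofInjective g hg)
  refine ⟨e.extendSubtype, fun i => ?_⟩
  have h1 : e.extendSubtype (c i) = e ⟨c i, ⟨i, rfl⟩⟩ :=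
    Equiv.extendSubtype_apply_of_mem e _ ⟨i, rfl⟩
  have h2 : (⟨c i, ⟨i, rfl⟩⟩ : {x // x ∈ Set.range c}) = Equiv.ofInjective c hc i := rfl
  rw [h1]
  show ((Equiv.ofInjective c hc).symm.trans (Equiv.ofInjective g hg)) ⟨c i, ⟨i, rfl⟩⟩ = g i
  rw [Equiv.trans_apply, h2, Equiv.symm_apply_apply]
  rfl

lemma card_noninj_filter' (k m : ℕ)
    [DecidablePred (fun f : Fin k → Fin m => ¬ Function.Injective f)] :
    (Finset.univ.filter (fun f : Fin k → Fin m => ¬ Function.Injective f)).card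
      = m ^ k - m.descFactorial k := by
  classical
  have hinj : (Finset.univ.filter (fun f : Fin k → Fin m => Function.Injective f)).card
      = m.descFactorial k := by
    rw [← Fintype.card_subtype,
      Fintype.card_congr (Equiv.subtypeInjectiveEquivEmbedding (Fin k) (Fin m))]
    simp [Fintype.card_embedding_eq]
  have h := Finset.card_filter_add_card_filter_not
    (s := (Finset.univ : Finset (Fin k → Fin m)))
    (p := fun f => Function.Injective f)
  have hcard : (Finset.univ : Finset (Fin k → Fin m)).card = m ^ k := by
    simp [Finset.card_univ]
  have hle : m.descFactorial k ≤ m ^ k := Nat.descFactorial_le_pow m k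
  rw [hcard] at h
  rw [show (Finset.filter (fun f : Fin k → Fin m => Function.Injective f) Finset.univ).card
      = m.descFactorial k from hinj] at h
  omega

section Aux
variable {S : Type*} [MetricSpace S] [TopologicalSpace.SeparableSpace S]
    [MeasurableSpace S] [BorelSpace S]

attribute [local instance] UniformSpace.secondCountable_of_separable

lemma intgF {k m : ℕ} (φ : Fin k → (S →ᵇ ℝ)) (f : Fin k → Fin m)
    (μ : Measure (Fin m → S)) [IsProbabilityMeasure μ] :
    Integrable (fun s : Fin m → S => ∏ i, φ i (s (f i))) μ := by
  refine Integrable.mono' (integrable_const (∏ i, ‖φ i‖))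
    (Continuous.aestronglyMeasurable ?_) (ae_of_all _ fun s => ?_)
  · exact continuous_finset_prod _ fun i _ => (φ i).continuous.comp (continuous_apply (f i))
  · rw [Real.norm_eq_abs, Finset.abs_prod]
    exact Finset.prod_le_prod (fun i _ => abs_nonneg _) (fun i _ => (φ i).norm_coe_le_norm _)

lemma normIntF {k m : ℕ} (φ : Fin k → (S →ᵇ ℝ)) (f : Fin k → Fin m)
    (μ : Measure (Fin m → S)) [IsProbabilityMeasure μ] :
    |∫ s, ∏ i, φ i (s (f i)) ∂μ| ≤ ∏ i, ‖φ i‖ := by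
  rw [← Real.norm_eq_abs]
  calc ‖∫ s, ∏ i, φ i (s (f i)) ∂μ‖ ≤ ∫ s, ‖∏ i, φ i (s (f i))‖ ∂μ :=
        norm_integral_le_integral_norm _
  _ ≤ ∫ _, (∏ i, ‖φ i‖) ∂μ := by
      refine integral_mono_of_nonneg (ae_of_all _ fun s => norm_nonneg _)
        (integrable_const _) (ae_of_all _ fun s => ?_)
      show ‖∏ i, φ i (s (f i))‖ ≤ ∏ i, ‖φ i‖
      rw [Real.norm_eq_abs, Finset.abs_prod]
      exact Finset.prod_le_prod (fun i _ => abs_nonneg _) (fun i _ => (φ i).norm_coe_le_norm _)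
  _ = ∏ i, ‖φ i‖ := by simp

lemma expansion {k m : ℕ} (φ : Fin k → (S →ᵇ ℝ))
    (μ : Measure (Fin m → S)) [IsProbabilityMeasure μ] :
    ∫ s, ∏ i, ∫ x, φ i x ∂(empiricalMeasure s) ∂μ
      = ((m:ℝ)⁻¹)^k * ∑ f : Fin k → Fin m, ∫ s, ∏ i, φ i (s (f i)) ∂μ := by
  have step1 : ∀ s : Fin m → S, ∏ i, ∫ x, φ i x ∂(empiricalMeasure s)
      = ((m:ℝ)⁻¹)^k * ∑ f : Fin k → Fin m, ∏ i, φ i (s (f i)) := by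
    intro s
    have : ∀ i : Fin k, ∫ x, φ i x ∂(empiricalMeasure s)
        = (m:ℝ)⁻¹ * ∑ j, φ i (s j) := by
      intro i
      rw [empiricalMeasure, integral_avgDirac]
      simp
    simp_rw [this]
    rw [Finset.prod_mul_distrib, Finset.prod_const, Finset.card_univ, Fintype.card_fin]
    congr 1
    rw [Finset.prod_univ_sum, Fintype.piFinset_univ]
  simp_rw [step1]
  rw [integral_const_mul, integral_finset_sum _ (fun f _ => intgF φ f μ)]

lemma integral_perm_eq {k m : ℕ} (hk : k ≤ m) (μ : Measure (Fin m → S))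
    [IsProbabilityMeasure μ] (hs : IsSymmetricLaw μ) (φ : Fin k → (S →ᵇ ℝ))
    (g : Fin k → Fin m) (hg : Function.Injective g) :
    ∫ s, ∏ i, φ i (s (g i)) ∂μ = ∫ s, ∏ i, φ i (s (Fin.castLE hk i)) ∂μ := by
  obtain ⟨π, hπ⟩ := exists_perm_extend' hk g hg
  have hT : Measurable (fun s : Fin m → S => s ∘ π) :=
    measurable_pi_lambda _ fun i => measurable_pi_apply _
  have cF : Continuous (fun s : Fin m → S => ∏ i, φ i (s (Fin.castLE hk i))) :=
    continuous_finset_prod _ fun i _ => (φ i).continuous.comp (continuous_apply _)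
  calc ∫ s, ∏ i, φ i (s (g i)) ∂μ
      = ∫ s, ∏ i, φ i ((s ∘ π) (Fin.castLE hk i)) ∂μ := by
        refine integral_congr_ae (ae_of_all _ fun s => ?_)
        refine Finset.prod_congr rfl fun i _ => ?_
        simp [Function.comp, hπ i]
    _ = ∫ s, ∏ i, φ i (s (Fin.castLE hk i)) ∂(Measure.map (fun s => s ∘ π) μ) :=
        (integral_map hT.aemeasurable cF.aestronglyMeasurable).symm
    _ = ∫ s, ∏ i, φ i (s (Fin.castLE hk i)) ∂μ := by rw [hs π]

lemma key_bound {k m : ℕ} (hk : k ≤ m) (μ : Measure (Fin m → S)) [IsProbabilityMeasure μ]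
    (hs : IsSymmetricLaw μ) (φ : Fin k → (S →ᵇ ℝ)) :
    |∫ s, ∏ i, ∫ x, φ i x ∂(empiricalMeasure s) ∂μ
        - ∫ s, ∏ i, φ i (s (Fin.castLE hk i)) ∂μ|
      ≤ ((m:ℝ)⁻¹)^k * (((m ^ k - m.descFactorial k : ℕ) : ℝ) * (2 * ∏ i, ‖φ i‖)) := by
  classical
  set A := ∫ s, ∏ i, φ i (s (Fin.castLE hk i)) ∂μ with hA_def
  set C := ∏ i, ‖φ i‖ with hC_def
  have hA : |A| ≤ C := normIntF φ _ μ
  have hI : ∀ f : Fin k → Fin m, |∫ s, ∏ i, φ i (s (f i)) ∂μ| ≤ C := fun f => normIntF φ f μ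
  have hmk : ((m:ℝ)⁻¹)^k * ((m:ℝ)^k) = 1 := by
    rcases Nat.eq_zero_or_pos k with hk0 | hk0
    · simp [hk0]
    · have hm0 : (m:ℝ) ≠ 0 := by
        have : 0 < m := lt_of_lt_of_le hk0 hk
        positivity
      rw [← mul_pow, inv_mul_cancel₀ hm0, one_pow]
  rw [expansion]
  have step : ((m:ℝ)⁻¹)^k * ∑ f : Fin k → Fin m, ∫ s, ∏ i, φ i (s (f i)) ∂μ - A
      = ((m:ℝ)⁻¹)^k * ∑ f : Fin k → Fin m, ((∫ s, ∏ i, φ i (s (f i)) ∂μ) - A) := by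
    rw [Finset.sum_sub_distrib, Finset.sum_const, Finset.card_univ, mul_sub]
    have : ((m:ℝ)⁻¹)^k * ((Fintype.card (Fin k → Fin m)) • A) = A := by
      rw [nsmul_eq_mul, ← mul_assoc]
      simp only [Fintype.card_fun, Fintype.card_fin]
      rw [Nat.cast_pow, hmk, one_mul]
    rw [this]
  rw [step]
  calc |((m:ℝ)⁻¹)^k * ∑ f : Fin k → Fin m, ((∫ s, ∏ i, φ i (s (f i)) ∂μ) - A)|
      ≤ ((m:ℝ)⁻¹)^k * ∑ f : Fin k → Fin m, |(∫ s, ∏ i, φ i (s (f i)) ∂μ) - A| := by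
        rw [abs_mul, abs_of_nonneg (by positivity : (0:ℝ) ≤ ((m:ℝ)⁻¹)^k)]
        exact mul_le_mul_of_nonneg_left (Finset.abs_sum_le_sum_abs _ _) (by positivity)
    _ ≤ ((m:ℝ)⁻¹)^k * ∑ f : Fin k → Fin m,
          (if Function.Injective f then 0 else 2 * C) := by
        refine mul_le_mul_of_nonneg_left (Finset.sum_le_sum fun f _ => ?_) (by positivity)
        by_cases hf : Function.Injective f
        · simp only [hf, if_true]
          rw [integral_perm_eq hk μ hs φ f hf]
          simp [hA_def]
        · simp only [hf, if_false]
          calc |(∫ s, ∏ i, φ i (s (f i)) ∂μ) - A|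
              ≤ |∫ s, ∏ i, φ i (s (f i)) ∂μ| + |A| := abs_sub _ _
            _ ≤ C + C := add_le_add (hI f) hA
            _ = 2 * C := by ring
    _ = ((m:ℝ)⁻¹)^k * (((m ^ k - m.descFactorial k : ℕ) : ℝ) * (2 * C)) := by
        congr 1
        rw [Finset.sum_ite, Finset.sum_const, Finset.sum_const, smul_zero, zero_add,
          nsmul_eq_mul, card_noninj_filter']

noncomputable def prodIntBCF {k : ℕ} (φ : Fin k → (S →ᵇ ℝ)) : ProbabilityMeasure S →ᵇ ℝ :=
  BoundedContinuousFunction.mkOfBound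
    ⟨fun μ => ∏ i, ∫ x, φ i x ∂(μ : Measure S),
      continuous_finset_prod _ fun i _ =>
        ProbabilityMeasure.continuous_integral_boundedContinuousFunction (φ i)⟩
    (2 * ∏ i, ‖φ i‖)
    (by
      intro x y
      have hb : ∀ μ : ProbabilityMeasure S, |∏ i, ∫ a, φ i a ∂(μ : Measure S)| ≤ ∏ i, ‖φ i‖ := by
        intro μ
        rw [Finset.abs_prod]
        refine Finset.prod_le_prod (fun i _ => abs_nonneg _) (fun i _ => ?_)
        rw [← Real.norm_eq_abs]
        exact (φ i).norm_integral_le_norm _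
      calc dist ((fun μ : ProbabilityMeasure S => ∏ i, ∫ a, φ i a ∂(μ : Measure S)) x)
            ((fun μ : ProbabilityMeasure S => ∏ i, ∫ a, φ i a ∂(μ : Measure S)) y)
          ≤ |∏ i, ∫ a, φ i a ∂(x : Measure S)| + |∏ i, ∫ a, φ i a ∂(y : Measure S)| := by
            rw [Real.dist_eq]; exact abs_sub _ _
        _ ≤ (∏ i, ‖φ i‖) + (∏ i, ‖φ i‖) := add_le_add (hb x) (hb y)
        _ = 2 * ∏ i, ‖φ i‖ := by ring)

@[simp] lemma prodIntBCF_apply {k : ℕ} (φ : Fin k → (S →ᵇ ℝ)) (μ : ProbabilityMeasure S) :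
    prodIntBCF φ μ = ∏ i, ∫ x, φ i x ∂(μ : Measure S) := rfl

end Aux

lemma bound_tendsto (k : ℕ) :
    Tendsto (fun n : ℕ =>
        (((k + n + 1 : ℕ):ℝ)⁻¹)^k
          * ((((k + n + 1) ^ k - (k + n + 1).descFactorial k : ℕ) : ℝ)))
      atTop (𝓝 0) := by
  have hupper : ∀ n : ℕ,
      (((k + n + 1 : ℕ):ℝ)⁻¹)^k * ((((k + n + 1) ^ k - (k + n + 1).descFactorial k : ℕ) : ℝ))
        ≤ 1 - (((n + 1 : ℕ):ℝ) / ((k + n + 1 : ℕ):ℝ))^k := by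
    intro n
    set m := k + n + 1
    have hm0 : (0:ℝ) < (m:ℝ) := by positivity
    have hdesc : ((n + 1) ^ k : ℕ) ≤ m.descFactorial k := by
      calc ((n + 1) ^ k : ℕ) ≤ (m + 1 - k) ^ k := by
            apply Nat.pow_le_pow_left; omega
        _ ≤ m.descFactorial k := Nat.pow_sub_le_descFactorial m k
    have hle : m.descFactorial k ≤ m ^ k := Nat.descFactorial_le_pow m k
    have hmk : (0:ℝ) < (m:ℝ)^k := by positivity
    have key : (((n + 1 : ℕ)):ℝ)^k ≤ ((m.descFactorial k : ℕ):ℝ) := by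
      exact_mod_cast hdesc
    rw [Nat.cast_sub hle, Nat.cast_pow, div_pow, inv_pow, mul_sub,
      inv_mul_cancel₀ (ne_of_gt hmk)]
    have : (((n + 1 : ℕ)):ℝ)^k / (m:ℝ)^k ≤ ((m:ℝ)^k)⁻¹ * ((m.descFactorial k : ℕ):ℝ) := by
      rw [div_eq_inv_mul]
      exact mul_le_mul_of_nonneg_left key (by positivity)
    linarith
  have hratio : Tendsto (fun n : ℕ => ((n + 1 : ℕ):ℝ) / ((k + n + 1 : ℕ):ℝ)) atTop (𝓝 1) := by
    have heq : ∀ n : ℕ, ((n + 1 : ℕ):ℝ) / ((k + n + 1 : ℕ):ℝ)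
        = 1 - (k:ℝ) / ((k + n + 1 : ℕ):ℝ) := by
      intro n
      have h0 : ((k + n + 1 : ℕ):ℝ) ≠ 0 := by positivity
      field_simp
      push_cast
      ring
    simp_rw [heq]
    have h1 : Tendsto (fun n : ℕ => (k:ℝ) / ((k + n + 1 : ℕ):ℝ)) atTop (𝓝 0) := by
      have hcomp : Tendsto (fun n : ℕ => (k + n + 1 : ℕ)) atTop atTop :=
        tendsto_atTop_mono (fun n => le_trans (Nat.le_add_left n k) (Nat.le_succ _)) tendsto_id
      exact (tendsto_const_div_atTop_nhds_zero_nat (k:ℝ)).comp hcomp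
    have := h1.const_sub 1
    simpa using this
  have hupper_tendsto : Tendsto
      (fun n : ℕ => 1 - (((n + 1 : ℕ):ℝ) / ((k + n + 1 : ℕ):ℝ))^k) atTop (𝓝 0) := by
    have := (hratio.pow k).const_sub 1
    simpa using this
  refine squeeze_zero (fun n => by positivity) hupper hupper_tendsto

/-- If the laws of the empirical measures converge weakly in `P(P(S))` to `δ_p`, then
`{ρ_n}` is `p`-chaotic. -/
theorem stmt4 {S : Type*} [MetricSpace S] [TopologicalSpace.SeparableSpace S]
    [MeasurableSpace S] [BorelSpace S]
    (ρ : ∀ n, Measure (Fin n → S)) (hprob : ∀ n, IsProbabilityMeasure (ρ n))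
    (hsym : ∀ n, IsSymmetricLaw (ρ n))
    (p : ProbabilityMeasure S)
    (h : EmpLawTendsto ρ p) :
    IsChaotic ρ (p : Measure S) := by
  intro k φ
  haveI := hprob
  set C := ∏ i, ‖φ i‖ with hC_def
  set A : ℕ → ℝ := fun n =>
    ∫ s, ∏ i : Fin k, φ i (s (Fin.castLE (by omega) i)) ∂ (ρ (k + n + 1)) with hA_def
  set B : ℕ → ℝ := fun n =>
    ∫ s, ∏ i : Fin k, ∫ x, φ i x ∂(empiricalMeasure s) ∂ (ρ (k + n + 1)) with hB_def
  have hB : Tendsto B atTop (𝓝 (∏ i, ∫ x, φ i x ∂(p : Measure S))) := by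
    have h0 := h (prodIntBCF φ)
    have hcomp : Tendsto (fun n : ℕ => k + n) atTop atTop :=
      tendsto_atTop_mono (fun n => Nat.le_add_left n k) tendsto_id
    have h1 := h0.comp hcomp
    have heq : ((fun n => ∫ s, (prodIntBCF φ) (empiricalPM (n + 1) s) ∂ (ρ (n + 1)))
        ∘ (fun n : ℕ => k + n)) = B := by
      funext n
      simp only [Function.comp, hB_def]
      rfl
    rw [heq] at h1
    simpa using h1
  have hdiff : Tendsto (fun n => A n - B n) atTop (𝓝 0) := by
    have hg : Tendsto (fun n : ℕ => (((k + n + 1 : ℕ):ℝ)⁻¹)^k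
          * (((k + n + 1) ^ k - (k + n + 1).descFactorial k : ℕ) : ℝ) * (2 * C))
        atTop (𝓝 0) := by
      simpa using (bound_tendsto k).mul_const (2 * C)
    refine squeeze_zero_norm (fun n => ?_) hg
    · have hk : k ≤ k + n + 1 := by omega
      have hb := key_bound hk (ρ (k + n + 1)) (hsym (k + n + 1)) φ
      rw [Real.norm_eq_abs, abs_sub_comm]
      calc |B n - A n| ≤ (((k + n + 1 : ℕ):ℝ)⁻¹)^k
            * ((((k + n + 1) ^ k - (k + n + 1).descFactorial k : ℕ) : ℝ) * (2 * C)) := hb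
        _ = (((k + n + 1 : ℕ):ℝ)⁻¹)^k
            * (((k + n + 1) ^ k - (k + n + 1).descFactorial k : ℕ) : ℝ) * (2 * C) := by ring
  have : Tendsto (fun n => B n + (A n - B n)) atTop
      (𝓝 (∏ i, ∫ x, φ i x ∂(p : Measure S) + 0)) := hB.add hdiff
  simpa using this
end

section
/- Let S = {s_1,...,s_k} be a finite set, ρ_n symmetric laws on S^n uniquely determined by occupancy probability functions P_n(j_1,...,j_k) on k-tuples of nonnegative integers summing to n, and let p = (p_1,...,p_k) be a probability vector. Then {ρ_n} is p-chaotic if and only if for every continuous function F on the unit simplex Δ_{k-1}, Σ_j P_n(j) F(j_1/n,...,j_k/n) → F(p) as n → ∞. -/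
open MeasureTheory Filter Topology BoundedContinuousFunction
open scoped ENNReal NNReal

open Finset in
/-- The vector of occupation frequencies of `s : Fin n → Fin k`. -/
noncomputable def freq (k : ℕ) {n : ℕ} (s : Fin n → Fin k) : Fin k → ℝ :=
  fun i => ((Finset.univ.filter fun j => s j = i).card : ℝ) / n

open Finset in
theorem freq_mem_stdSimplex (k : ℕ) {n : ℕ} [NeZero n] (s : Fin n → Fin k) :
    freq k s ∈ stdSimplex ℝ (Fin k) := by
  have hn : (n : ℝ) ≠ 0 := Nat.cast_ne_zero.mpr (NeZero.ne n)
  constructor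
  · intro i
    unfold freq
    positivity
  · unfold freq
    rw [← Finset.sum_div]
    rw [div_eq_one_iff_eq hn]
    rw [← Nat.cast_sum]
    congr 1
    rw [← Finset.card_eq_sum_card_fiberwise (f := s) (fun j _ => Finset.mem_univ (s j))]
    simp

/-- The occupation frequency vector as a point of the standard simplex. -/
noncomputable def freqSimplex (k : ℕ) {n : ℕ} [NeZero n] (s : Fin n → Fin k) :
    stdSimplex ℝ (Fin k) :=
  ⟨freq k s, freq_mem_stdSimplex k s⟩



section ChaosAux

open Function

def Aset {k : ℕ} {m : ℕ} (n : ℕ) (z : Fin m → Fin k) (j : Fin m → Fin n) :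
    Set (Fin n → Fin k) := {s | ∀ i, s (j i) = z i}

lemma exists_perm_comp {α β : Type*} [Fintype α] [Fintype β] [DecidableEq β]
    {f g : α → β} (hf : Injective f) (hg : Injective g) :
    ∃ π : Equiv.Perm β, ∀ a, π (f a) = g a := by
  classical
  have hcard : Fintype.card ((Set.range f)ᶜ : Set β) = Fintype.card ((Set.range g)ᶜ : Set β) := by
    rw [Fintype.card_compl_set, Fintype.card_compl_set, Set.card_range_of_injective hf,
      Set.card_range_of_injective hg]
  let ec : ((Set.range f)ᶜ : Set β) ≃ ((Set.range g)ᶜ : Set β) := Fintype.equivOfCardEq hcard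
  refine ⟨(Equiv.Set.sumCompl (Set.range f)).symm.trans
    ((Equiv.sumCongr ((Equiv.ofInjective f hf).symm.trans (Equiv.ofInjective g hg)) ec).trans
      (Equiv.Set.sumCompl (Set.range g))), fun a => ?_⟩
  have h1 : (Equiv.Set.sumCompl (Set.range f)).symm (f a) = Sum.inl (⟨f a, ⟨a, rfl⟩⟩ : Set.range f) :=
    Equiv.Set.sumCompl_symm_apply (s := Set.range f) (x := ⟨f a, ⟨a, rfl⟩⟩)
  simp only [Equiv.trans_apply, h1, Equiv.sumCongr_apply, Sum.map_inl,
    Equiv.Set.sumCompl_apply_inl]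
  have : (Equiv.ofInjective f hf).symm (⟨f a, ⟨a, rfl⟩⟩ : Set.range f) = a := by
    apply hf
    simp [Equiv.apply_ofInjective_symm hf]
  rw [this]
  rfl


lemma measure_Aset_eq {k m n : ℕ} (μ : Measure (Fin n → Fin k)) (hsym : IsSymmetricLaw μ)
    (z : Fin m → Fin k) {j j' : Fin m → Fin n} (hj : Injective j) (hj' : Injective j') :
    μ (Aset n z j) = μ (Aset n z j') := by
  obtain ⟨π, hπ⟩ := exists_perm_comp hj' hj
  have hpre : (fun s : Fin n → Fin k => s ∘ π) ⁻¹' (Aset n z j') = Aset n z j := by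
    ext s
    simp only [Set.mem_preimage, Aset, Set.mem_setOf_eq, Function.comp]
    exact forall_congr' fun i => by rw [hπ i]
  calc μ (Aset n z j) = μ ((fun s : Fin n → Fin k => s ∘ π) ⁻¹' (Aset n z j')) := by rw [hpre]
    _ = (Measure.map (fun s : Fin n → Fin k => s ∘ π) μ) (Aset n z j') := by
        rw [Measure.map_apply (by exact measurable_of_countable _) MeasurableSet.of_discrete]
    _ = μ (Aset n z j') := by rw [hsym π]

-- pointwise expansion
lemma prod_freq_eq {k m n : ℕ} (z : Fin m → Fin k) (s : Fin n → Fin k) :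
    ∏ i : Fin m, freq k s (z i)
      = (∑ j : Fin m → Fin n, if ∀ i, s (j i) = z i then (1:ℝ) else 0) / (n : ℝ) ^ m := by
  classical
  have h1 : ∀ i : Fin m, freq k s (z i) = (∑ j : Fin n, if s j = z i then (1:ℝ) else 0) / n := by
    intro i
    unfold freq
    rw [Finset.sum_boole]
  rw [Finset.prod_congr rfl fun i _ => h1 i, Finset.prod_div_distrib, Finset.prod_const,
    Finset.card_univ, Fintype.card_fin, Finset.prod_univ_sum]
  congr 1
  rw [Fintype.piFinset_univ]
  refine Finset.sum_congr rfl ?_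
  intro x _
  by_cases h : ∀ i, s (x i) = z i
  · rw [if_pos h]; exact Finset.prod_eq_one fun i _ => if_pos (h i)
  · rw [if_neg h]
    push_neg at h
    obtain ⟨i, hi⟩ := h
    exact Finset.prod_eq_zero (Finset.mem_univ i) (if_neg hi)

lemma integral_prod_freq {k m n : ℕ} (μ : Measure (Fin n → Fin k)) [IsProbabilityMeasure μ]
    (z : Fin m → Fin k) :
    ∫ s, ∏ i : Fin m, freq k s (z i) ∂μ
      = (∑ j : Fin m → Fin n, (μ (Aset n z j)).toReal) / (n : ℝ) ^ m := by
  classical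
  simp_rw [prod_freq_eq]
  rw [integral_div, integral_finset_sum _ (fun j _ => .of_finite)]
  congr 1
  refine Finset.sum_congr rfl fun j _ => ?_
  have heq : (fun s : Fin n → Fin k => if ∀ i, s (j i) = z i then (1:ℝ) else 0)
      = Set.indicator (Aset n z j) (fun _ => 1) := by
    funext s
    by_cases h : s ∈ Aset n z j
    · rw [Set.indicator_of_mem h]; exact if_pos h
    · rw [Set.indicator_of_notMem h]; exact if_neg h
  rw [heq]
  exact integral_indicator_one MeasurableSet.of_discrete

lemma tendsto_desc (m : ℕ) :
    Tendsto (fun n : ℕ => (n.descFactorial m : ℝ) / (n : ℝ) ^ m) atTop (𝓝 1) := by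
  have h1 : Tendsto (fun n : ℕ => ∏ i ∈ Finset.range m, (1 - (i : ℝ) / n)) atTop
      (𝓝 (∏ i ∈ Finset.range m, (1:ℝ))) := by
    refine tendsto_finset_prod _ fun i _ => ?_
    have := tendsto_const_div_atTop_nhds_zero_nat (i : ℝ)
    have h2 := (tendsto_const_nhds (α := ℕ) (f := atTop) (x := (1:ℝ))).sub this
    simpa using h2
  rw [Finset.prod_const_one] at h1
  refine h1.congr' ?_
  filter_upwards [eventually_ge_atTop m, eventually_ge_atTop 1] with n hn hn1
  have hnR : (0:ℝ) < n := by exact_mod_cast hn1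
  rw [Nat.descFactorial_eq_prod_range]
  rw [Nat.cast_prod]
  have : ∀ i ∈ Finset.range m, ((n - i : ℕ) : ℝ) = (n : ℝ) - i := by
    intro i hi
    exact Nat.cast_sub (le_trans (Finset.mem_range.mp hi).le hn)
  rw [Finset.prod_congr rfl this]
  rw [eq_div_iff (by positivity)]
  have hpow : (n:ℝ)^m = ∏ _i ∈ Finset.range m, (n:ℝ) := by
    rw [Finset.prod_const, Finset.card_range]
  rw [hpow, ← Finset.prod_mul_distrib]
  refine Finset.prod_congr rfl fun i hi => ?_
  field_simp

lemma key_est {k m n : ℕ} (hmn : m ≤ n) (μ : Measure (Fin n → Fin k)) [IsProbabilityMeasure μ]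
    (hsym : IsSymmetricLaw μ) (z : Fin m → Fin k) :
    |∫ s, ∏ i : Fin m, freq k s (z i) ∂μ - (μ (Aset n z (Fin.castLE hmn))).toReal|
      ≤ 2 * (1 - (n.descFactorial m : ℝ) / (n : ℝ) ^ m) := by
  classical
  set M : ℝ := (μ (Aset n z (Fin.castLE hmn))).toReal with hMdef
  have hM0 : 0 ≤ M := ENNReal.toReal_nonneg
  have hM1 : M ≤ 1 := by
    rw [hMdef]
    exact ENNReal.toReal_le_of_le_ofReal zero_le_one (by simpa using prob_le_one)
  set N : ℝ := (n : ℝ) ^ m with hNdef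
  have hN : 0 < N := by
    rcases Nat.eq_zero_or_pos n with h | h
    · have hm0 : m = 0 := le_antisymm (h ▸ hmn) (Nat.zero_le _)
      simp [hNdef, hm0]
    · have : (0:ℝ) < n := by exact_mod_cast h
      exact pow_pos this m
  set I : Finset (Fin m → Fin n) := Finset.univ.filter (fun j => Function.Injective j) with hI
  have hciR : (I.card : ℝ) = (n.descFactorial m : ℝ) := by
    norm_cast
    have e1 : { j : Fin m → Fin n // Function.Injective j } ≃ (Fin m ↪ Fin n) :=
      Equiv.subtypeInjectiveEquivEmbedding _ _
    have h2 : I.card = Fintype.card { j : Fin m → Fin n // Function.Injective j } :=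
      (Fintype.card_subtype _).symm
    rw [h2, Fintype.card_congr e1, Fintype.card_embedding_eq, Fintype.card_fin, Fintype.card_fin]
  have hNuniv : ((Finset.univ : Finset (Fin m → Fin n)).card : ℝ) = N := by
    rw [Finset.card_univ, Fintype.card_fun, Fintype.card_fin, Fintype.card_fin]
    push_cast; rfl
  have hcard : (I.card : ℝ) ≤ N := by
    rw [← hNuniv]
    exact_mod_cast Finset.card_filter_le _ _
  set t : (Fin m → Fin n) → ℝ := fun j => (μ (Aset n z j)).toReal with ht
  have ht0 : ∀ j, 0 ≤ t j := fun j => ENNReal.toReal_nonneg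
  have ht1 : ∀ j, t j ≤ 1 := fun j =>
    ENNReal.toReal_le_of_le_ofReal zero_le_one (by simpa using prob_le_one)
  have htI : ∀ j ∈ I, t j = M := fun j hj =>
    congrArg ENNReal.toReal
      (measure_Aset_eq μ hsym z (Finset.mem_filter.mp hj).2 (Fin.castLE_injective hmn))
  set R : ℝ := ∑ j ∈ Finset.univ.filter (fun j : Fin m → Fin n => ¬ Function.Injective j), t j
    with hRdef
  have hsplit : ∑ j : Fin m → Fin n, t j = (I.card : ℝ) * M + R := by
    rw [← Finset.sum_filter_add_sum_filter_not Finset.univ (fun j => Function.Injective j) t]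
    congr 1
    rw [Finset.sum_congr rfl htI, Finset.sum_const, nsmul_eq_mul]
  have hR0 : 0 ≤ R := Finset.sum_nonneg fun j _ => ht0 j
  have hRle : R ≤ N - I.card := by
    have h1 : R ≤ ((Finset.univ.filter (fun j : Fin m → Fin n => ¬ Function.Injective j)).card : ℝ) := by
      calc R ≤ ∑ _j ∈ Finset.univ.filter (fun j : Fin m → Fin n => ¬ Function.Injective j), (1:ℝ) :=
            Finset.sum_le_sum fun j _ => ht1 j
        _ = _ := by rw [Finset.sum_const, nsmul_eq_mul, mul_one]
    refine h1.trans ?_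
    have h2 : (Finset.univ.filter (fun j : Fin m → Fin n => ¬ Function.Injective j))
        = Finset.univ \ I := by rw [hI, Finset.filter_not]
    rw [h2, Finset.card_sdiff_of_subset (by rw [hI]; exact Finset.filter_subset _ _),
      Nat.cast_sub (by rw [hI]; exact Finset.card_le_card (Finset.filter_subset _ _)), hNuniv]
  rw [integral_prod_freq μ z, ← hNdef]
  have hsum : (∑ j : Fin m → Fin n, (μ (Aset n z j)).toReal) = (I.card : ℝ) * M + R := hsplit
  rw [hsum, ← hciR]
  have heq1 : ((I.card : ℝ) * M + R) / N - M = ((I.card : ℝ) * M + R - N * M) / N := by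
    field_simp
  rw [heq1, abs_div, abs_of_pos hN]
  have h4 : |(I.card : ℝ) * M + R - N * M| ≤ 2 * (N - I.card) := by
    rw [abs_le]
    constructor <;> nlinarith
  calc |(I.card : ℝ) * M + R - N * M| / N ≤ (2 * (N - I.card)) / N := by gcongr
    _ = 2 * (1 - (I.card : ℝ) / N) := by field_simp

lemma tendsto_iff_of_sub_zero {f g : ℕ → ℝ} {L : ℝ}
    (h : Tendsto (fun n => f n - g n) atTop (𝓝 0)) :
    Tendsto f atTop (𝓝 L) ↔ Tendsto g atTop (𝓝 L) := by
  constructor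
  · intro hf
    have := hf.sub h
    simpa using this
  · intro hg
    have := hg.add h
    have heq : (fun n => g n + (f n - g n)) = f := by funext n; ring
    rw [heq] at this
    simpa using this

lemma bridge {k : ℕ} (m : ℕ) (ρ : ∀ n, Measure (Fin n → Fin k))
    (hprob : ∀ n, IsProbabilityMeasure (ρ n)) (hsym : ∀ n, IsSymmetricLaw (ρ n))
    (z : Fin m → Fin k) (L : ℝ) :
    Tendsto (fun n => (ρ (m + n + 1) (Aset (m + n + 1) z (Fin.castLE (by omega)))).toReal)
      atTop (𝓝 L)
    ↔ Tendsto (fun n => ∫ s, ∏ i : Fin m, freq k s (z i) ∂ (ρ (n + 1))) atTop (𝓝 L) := by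
  classical
  haveI := hprob
  set Mm : ℕ → ℝ := fun n =>
    if h : m ≤ n + 1 then (ρ (n+1) (Aset (n+1) z (Fin.castLE h))).toReal else 0 with hMm
  have hshift : (fun n => (ρ (m + n + 1) (Aset (m + n + 1) z (Fin.castLE (by omega)))).toReal)
      = fun n => Mm (m + n) := by
    funext n
    simp only [hMm]
    rw [dif_pos (show m ≤ m + n + 1 by omega)]
  have hMmshift : (fun n => Mm (m + n)) = fun n => Mm (n + m) := by
    funext n; rw [add_comm]
  -- difference tends to zero
  have hdesc : Tendsto (fun n : ℕ => ((n+1).descFactorial m : ℝ) / ((n:ℝ)+1) ^ m) atTop (𝓝 1) := by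
    have := (tendsto_desc m).comp (tendsto_add_atTop_nat 1)
    simpa [Function.comp_def] using this
  have hg0 : Tendsto (fun n : ℕ => 2 * (1 - ((n+1).descFactorial m : ℝ) / ((n:ℝ)+1) ^ m))
      atTop (𝓝 0) := by
    have := (tendsto_const_nhds (x := (1:ℝ)) (f := atTop (α := ℕ))).sub hdesc
    have h2 := this.const_mul 2
    simpa using h2
  have hdiff : Tendsto (fun n => (∫ s, ∏ i : Fin m, freq k s (z i) ∂ (ρ (n + 1))) - Mm n)
      atTop (𝓝 0) := by
    apply squeeze_zero_norm' ?_ hg0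
    filter_upwards [eventually_ge_atTop m] with n hn
    have hmn : m ≤ n + 1 := by omega
    rw [hMm]
    simp only [dif_pos hmn]
    have := key_est hmn (ρ (n+1)) (hsym (n+1)) z
    rw [Real.norm_eq_abs]
    convert this using 4
    push_cast
    ring
  rw [hshift, hMmshift, tendsto_add_atTop_iff_nat m]
  exact (tendsto_iff_of_sub_zero hdiff).symm


noncomputable def monomialFn (k : ℕ) {m : ℕ} (z : Fin m → Fin k) :
    C(stdSimplex ℝ (Fin k), ℝ) :=
  ⟨fun q => ∏ i : Fin m, (q : Fin k → ℝ) (z i),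
    continuous_finset_prod _ fun i _ => (continuous_apply (z i)).comp continuous_subtype_val⟩

end ChaosAux

/-- (Chaos on finite sets) `{ρ_n}` is `p`-chaotic iff for every continuous function `F` on the
unit simplex, the mean of `F` at the occupation-frequency vector converges to `F(p)`. -/
theorem stmt6 (k : ℕ) (ρ : ∀ n, Measure (Fin n → Fin k))
    (hprob : ∀ n, IsProbabilityMeasure (ρ n))
    (hsym : ∀ n, IsSymmetricLaw (ρ n))
    (p : Fin k → ℝ) (hp : p ∈ stdSimplex ℝ (Fin k)) :
    (∀ (m : ℕ) (z : Fin m → Fin k),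
      Tendsto
        (fun n => (ρ (m + n + 1) {s | ∀ i : Fin m, s (Fin.castLE (by omega) i) = z i}).toReal)
        atTop (𝓝 (∏ i : Fin m, p (z i))))
    ↔ ∀ F : C(stdSimplex ℝ (Fin k), ℝ),
        Tendsto (fun n => ∫ s, F (freqSimplex k s) ∂ (ρ (n + 1))) atTop (𝓝 (F ⟨p, hp⟩)) := by
  classical
  haveI := hprob
  haveI : CompactSpace (stdSimplex ℝ (Fin k)) :=
    isCompact_iff_compactSpace.mp (isCompact_stdSimplex _ _)
  constructor
  · intro hyp F
    set P : C(stdSimplex ℝ (Fin k), ℝ) → Prop := fun G =>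
      Tendsto (fun n => ∫ s, G (freqSimplex k s) ∂ (ρ (n + 1))) atTop (𝓝 (G ⟨p, hp⟩)) with hPdef
    have hmono : ∀ (m : ℕ) (z : Fin m → Fin k), P (monomialFn k z) := by
      intro m z
      have h1 := (bridge m ρ hprob hsym z (∏ i, p (z i))).mp (hyp m z)
      exact h1
    have hzero : P 0 := by
      rw [hPdef]
      simp only [ContinuousMap.zero_apply]
      simpa using tendsto_const_nhds (x := (0:ℝ)) (f := atTop (α := ℕ))
    have hadd : ∀ F G, P F → P G → P (F + G) := by
      intro F G hF hG
      have h := hF.add hG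
      rw [hPdef]
      simp only [ContinuousMap.add_apply]
      convert h using 2 with n
      exact integral_add .of_finite .of_finite
    have hsmul : ∀ (c : ℝ) F, P F → P (c • F) := by
      intro c F hF
      have h := hF.const_mul c
      rw [hPdef]
      simp only [ContinuousMap.smul_apply, smul_eq_mul]
      convert h using 2 with n
      simpa using integral_smul c (fun s : Fin (n+1) → Fin k => F (freqSimplex k s))
    set coord : Fin k → C(stdSimplex ℝ (Fin k), ℝ) := fun i =>
      ⟨fun q => (q : Fin k → ℝ) i, (continuous_apply i).comp continuous_subtype_val⟩
      with hcoord
    set A : Subalgebra ℝ C(stdSimplex ℝ (Fin k), ℝ) := Algebra.adjoin ℝ (Set.range coord)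
      with hA
    have hmoncl : ∀ g ∈ Submonoid.closure (Set.range coord),
        ∃ (m : ℕ) (z : Fin m → Fin k), g = monomialFn k z := by
      intro g hg
      induction hg using Submonoid.closure_induction with
      | mem x hx =>
        obtain ⟨i, rfl⟩ := hx
        refine ⟨1, fun _ => i, ?_⟩
        ext q
        show (q : Fin k → ℝ) i = ∏ _j : Fin 1, (q : Fin k → ℝ) i
        simp
      | one =>
        refine ⟨0, Fin.elim0, ?_⟩
        ext q
        show (1 : ℝ) = ∏ i : Fin 0, (q : Fin k → ℝ) (Fin.elim0 i)
        simp
      | mul x y hx hy ihx ihy =>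
        obtain ⟨m1, z1, rfl⟩ := ihx
        obtain ⟨m2, z2, rfl⟩ := ihy
        refine ⟨m1 + m2, Fin.append z1 z2, ?_⟩
        ext q
        show (∏ i : Fin m1, (q : Fin k → ℝ) (z1 i)) * (∏ i : Fin m2, (q : Fin k → ℝ) (z2 i))
          = ∏ i : Fin (m1 + m2), (q : Fin k → ℝ) (Fin.append z1 z2 i)
        rw [Fin.prod_univ_add]
        congr 1
        · exact Finset.prod_congr rfl fun i _ => by rw [Fin.append_left]
        · exact Finset.prod_congr rfl fun i _ => by rw [Fin.append_right]
    have hAP : ∀ g ∈ A, P g := by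
      intro g hg
      rw [hA] at hg
      have hg' : g ∈ Submodule.span ℝ (Submonoid.closure (Set.range coord) :
          Set C(stdSimplex ℝ (Fin k), ℝ)) := by
        rw [← Algebra.adjoin_eq_span]
        exact hg
      clear hg
      induction hg' using Submodule.span_induction with
      | mem x hx =>
        obtain ⟨m, z, rfl⟩ := hmoncl x hx
        exact hmono m z
      | zero => exact hzero
      | add x y hx hy ihx ihy => exact hadd x y ihx ihy
      | smul c x hx ihx => exact hsmul c x ihx
    have hsep : A.SeparatesPoints := by
      intro x y hxy
      have hne : (x : Fin k → ℝ) ≠ (y : Fin k → ℝ) := fun h => hxy (Subtype.ext h)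
      obtain ⟨i, hi⟩ := Function.ne_iff.mp hne
      exact ⟨coord i, ⟨coord i, Algebra.subset_adjoin ⟨i, rfl⟩, rfl⟩, hi⟩
    rw [Metric.tendsto_atTop]
    intro ε hε
    obtain ⟨⟨g, hgA⟩, hdist⟩ :=
      ContinuousMap.exists_mem_subalgebra_near_continuousMap_of_separatesPoints A hsep F
        (ε / 3) (by positivity)
    have hgF : dist g F < ε / 3 := by rwa [dist_eq_norm]
    have hPg := hAP g hgA
    rw [hPdef, Metric.tendsto_atTop] at hPg
    obtain ⟨N, hN⟩ := hPg (ε / 3) (by positivity)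
    refine ⟨N, fun n hn => ?_⟩
    have h1 : dist (∫ s, F (freqSimplex k s) ∂ (ρ (n + 1)))
        (∫ s, g (freqSimplex k s) ∂ (ρ (n + 1))) ≤ dist g F := by
      rw [Real.dist_eq, ← integral_sub .of_finite .of_finite]
      have hb : ∀ s : Fin (n+1) → Fin k,
          ‖F (freqSimplex k s) - g (freqSimplex k s)‖ ≤ dist g F := by
        intro s
        rw [Real.norm_eq_abs, ← Real.dist_eq, dist_comm g F]
        exact ContinuousMap.dist_apply_le_dist _
      calc ‖∫ s, (F (freqSimplex k s) - g (freqSimplex k s)) ∂ (ρ (n + 1))‖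
          ≤ dist g F * ((ρ (n+1)) Set.univ).toReal :=
            norm_integral_le_of_norm_le_const (Eventually.of_forall hb)
        _ = dist g F := by simp
    have h3 : dist (g ⟨p, hp⟩) (F ⟨p, hp⟩) ≤ dist g F :=
      ContinuousMap.dist_apply_le_dist _
    calc dist (∫ s, F (freqSimplex k s) ∂ (ρ (n + 1))) (F ⟨p, hp⟩)
        ≤ dist (∫ s, F (freqSimplex k s) ∂ (ρ (n + 1)))
            (∫ s, g (freqSimplex k s) ∂ (ρ (n + 1)))
          + dist (∫ s, g (freqSimplex k s) ∂ (ρ (n + 1))) (g ⟨p, hp⟩)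
          + dist (g ⟨p, hp⟩) (F ⟨p, hp⟩) := dist_triangle4 _ _ _ _
      _ < ε := by
        have h2 := hN n hn
        linarith
  · intro hF m z
    have hPm := hF (monomialFn k z)
    exact (bridge m ρ hprob hsym z (∏ i, p (z i))).mpr hPm
end

section
/- (Convergence of specific entropy) Let S = {s_1,...,s_k} be a finite set and ρ_n a symmetric law on S^n for each n. If {ρ_n} is p-chaotic for a probability vector p = (p_1,...,p_k), then the specific entropy converges to the entropy of p: lim_{n→∞} −(1/n) Σ_{x ∈ S^n} ρ_n(x) log ρ_n(x) = −Σ_{i=1}^k p_i log p_i. -/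
open MeasureTheory Filter Topology BoundedContinuousFunction
open scoped ENNReal NNReal

section AuxEntropy
open Finset MeasureTheory Filter Topology



-- count function
def cnt {N k : ℕ} (x : Fin N → Fin k) : Fin k → ℕ :=
  fun i => (univ.filter (fun j => x j = i)).card

lemma cnt_sum {N k : ℕ} (x : Fin N → Fin k) : ∑ i, cnt x i = N := by
  classical
  unfold cnt
  rw [← Finset.card_eq_sum_card_fiberwise (f := x) (t := univ) (fun _ _ => mem_univ _)]
  simp

lemma cnt_le {N k : ℕ} (x : Fin N → Fin k) (i : Fin k) : cnt x i ≤ N := by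
  calc cnt x i ≤ ∑ i', cnt x i' := Finset.single_le_sum (fun _ _ => Nat.zero_le _) (mem_univ i)
  _ = N := cnt_sum x

-- C1: same counts implies related by permutation
lemma exists_perm_of_cnt_eq {N k : ℕ} {x y : Fin N → Fin k} (h : cnt x = cnt y) :
    ∃ π : Equiv.Perm (Fin N), y ∘ π = x := by
  classical
  have hcard : ∀ i, Fintype.card {j // x j = i} = Fintype.card {j // y j = i} := by
    intro i
    simp only [Fintype.card_subtype]
    exact congrFun h i
  let e : ∀ i, {j // x j = i} ≃ {j // y j = i} := fun i => Fintype.equivOfCardEq (hcard i)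
  let π : Equiv.Perm (Fin N) :=
    ((Equiv.sigmaFiberEquiv x).symm.trans (Equiv.sigmaCongrRight e)).trans (Equiv.sigmaFiberEquiv y)
  refine ⟨π, funext fun j => ?_⟩
  have : π j = (e (x j) ⟨j, rfl⟩).val := rfl
  simp only [Function.comp_apply, this]
  exact (e (x j) ⟨j, rfl⟩).2



lemma stab_card_le {N k : ℕ} (x : Fin N → Fin k) :
    ((univ : Finset (Equiv.Perm (Fin N))).filter
      (fun τ : Equiv.Perm (Fin N) => ∀ j, x (τ j) = x j)).card
      ≤ ∏ i, Nat.factorial (cnt x i) := by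
  classical
  let F : Equiv.Perm (Fin N) → ∀ i, ({j // x j = i} ↪ {j // x j = i}) :=
    fun τ i =>
      if h : (∀ j : {j // x j = i}, x (τ j.val) = i) then
        ⟨fun j => ⟨τ j.val, h j⟩, by
          intro a b hab
          apply Subtype.ext
          exact τ.injective (congrArg Subtype.val hab)⟩
      else Function.Embedding.refl _
  have key : ∀ τ : Equiv.Perm (Fin N), (∀ j, x (τ j) = x j) → ∀ i (j : {j // x j = i}),
      (F τ i j).val = τ j.val := by
    intro τ hτ i j
    have h : (∀ j' : {j' // x j' = i}, x (τ j'.val) = i) := by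
      intro j'; rw [hτ j'.val]; exact j'.2
    simp only [F, dif_pos h]
    rfl
  have hinj : Set.InjOn F ((univ : Finset (Equiv.Perm (Fin N))).filter
      (fun τ : Equiv.Perm (Fin N) => ∀ j, x (τ j) = x j)) := by
    intro τ hτ σ hσ hF
    simp only [coe_filter, Set.mem_setOf_eq, mem_univ, true_and] at hτ hσ
    apply Equiv.ext; intro j
    have := congrArg (fun (g : {j' // x j' = x j} ↪ {j' // x j' = x j}) => (g ⟨j, rfl⟩).val)
      (congrFun hF (x j))
    rw [key τ hτ, key σ hσ] at this
    exact this
  calc ((univ : Finset (Equiv.Perm (Fin N))).filter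
        (fun τ : Equiv.Perm (Fin N) => ∀ j, x (τ j) = x j)).card
      ≤ Fintype.card (∀ i, ({j // x j = i} ↪ {j // x j = i})) := by
        have := Finset.card_le_card_of_injOn F (fun a _ => Finset.mem_univ (F a)) hinj
        simpa using this
    _ ≤ ∏ i, Nat.factorial (cnt x i) := by
        rw [Fintype.card_pi]
        refine Finset.prod_le_prod (fun _ _ => Nat.zero_le _) (fun i _ => ?_)
        rw [Fintype.card_embedding_eq]
        have hc : Fintype.card {j // x j = i} = cnt x i := by
          simp [Fintype.card_subtype, cnt]
        rw [hc, Nat.descFactorial_self]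



lemma cnt_comp_perm {N k : ℕ} (x : Fin N → Fin k) (π : Equiv.Perm (Fin N)) :
    cnt (x ∘ ⇑π) = cnt x := by
  funext i
  unfold cnt
  apply Finset.card_bij (fun j _ => π j)
  · intro a ha
    simp only [mem_filter, mem_univ, true_and, Function.comp_apply] at ha ⊢
    exact ha
  · intro a _ b _ hab
    exact π.injective hab
  · intro b hb
    refine ⟨π.symm b, ?_, by simp⟩
    simp only [mem_filter, mem_univ, true_and, Function.comp_apply, Equiv.apply_symm_apply] at hb ⊢
    exact hb

lemma factorial_le_class_mul (N k : ℕ) (x₀ : Fin N → Fin k)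
    (stab_card_le : ∀ x : Fin N → Fin k,
      ((univ : Finset (Equiv.Perm (Fin N))).filter
        (fun τ : Equiv.Perm (Fin N) => ∀ j, x (τ j) = x j)).card ≤ ∏ i, Nat.factorial (cnt x i))
    (exists_perm : ∀ {x y : Fin N → Fin k}, cnt x = cnt y → ∃ π : Equiv.Perm (Fin N), y ∘ ⇑π = x) :
    Nat.factorial N ≤
      (∏ i, Nat.factorial (cnt x₀ i)) *
        ((univ : Finset (Fin N → Fin k)).filter (fun y => cnt y = cnt x₀)).card := by
  classical
  set Φ : Equiv.Perm (Fin N) → (Fin N → Fin k) := fun σ => x₀ ∘ ⇑σ with hΦ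
  have hcard : (univ : Finset (Equiv.Perm (Fin N))).card = Nat.factorial N := by
    simp [Finset.card_univ, Fintype.card_perm, Fintype.card_fin]
  have step1 : (univ : Finset (Equiv.Perm (Fin N))).card ≤
      (∏ i, Nat.factorial (cnt x₀ i)) * ((univ : Finset (Equiv.Perm (Fin N))).image Φ).card := by
    apply Finset.card_le_mul_card_image
    intro y hy
    simp only [Finset.mem_image] at hy
    obtain ⟨σ₀, _, hσ₀⟩ := hy
    -- fiber over y injects into stabilizer of x₀
    have hfib : ((univ : Finset (Equiv.Perm (Fin N))).filter (fun σ => Φ σ = y)).card ≤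
        ((univ : Finset (Equiv.Perm (Fin N))).filter
          (fun τ : Equiv.Perm (Fin N) => ∀ j, x₀ (τ j) = x₀ j)).card := by
      apply Finset.card_le_card_of_injOn (fun σ => σ₀.symm.trans σ)
      · intro σ hσ
        simp only [coe_filter, Set.mem_setOf_eq, mem_univ, true_and, mem_filter] at hσ
        simp only [mem_coe, mem_filter, mem_univ, true_and]
        intro j
        have h1 : Φ σ = Φ σ₀ := by rw [hσ, hσ₀]
        have := congrFun h1 (σ₀.symm j)
        simpa [Φ] using this
      · intro a _ b _ hab
        have := congrArg (σ₀.trans) hab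
        simpa [← Equiv.trans_assoc] using this
    exact hfib.trans (stab_card_le x₀)
  have step2 : ((univ : Finset (Equiv.Perm (Fin N))).image Φ).card ≤
      ((univ : Finset (Fin N → Fin k)).filter (fun y => cnt y = cnt x₀)).card := by
    apply Finset.card_le_card
    intro y hy
    simp only [Finset.mem_image] at hy
    obtain ⟨σ, _, hσ⟩ := hy
    simp only [mem_filter, mem_univ, true_and]
    rw [← hσ]
    exact cnt_comp_perm x₀ σ
  calc Nat.factorial N = (univ : Finset (Equiv.Perm (Fin N))).card := hcard.symm
    _ ≤ _ := step1
    _ ≤ _ := by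
      exact Nat.mul_le_mul_left _ step2


lemma log_factorial_ge (t : ℕ) : (t : ℝ) * Real.log t - t ≤ Real.log (Nat.factorial t) := by
  induction t with
  | zero => simp
  | succ t ih =>
    rcases Nat.eq_zero_or_pos t with rfl | ht
    · simp
    have htpos : (0:ℝ) < t := by exact_mod_cast ht
    have h1 : Real.log (Nat.factorial (t+1)) = Real.log (Nat.factorial t) + Real.log (t+1) := by
      rw [Nat.factorial_succ, Nat.cast_mul, Real.log_mul (by positivity) (by positivity)]
      push_cast; ring
    rw [h1]
    have key : (t : ℝ) * Real.log (t+1) ≤ (t:ℝ) * Real.log t + 1 := by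
      have hlog : Real.log ((t+1)/t) ≤ (t+1)/t - 1 := Real.log_le_sub_one_of_pos (by positivity)
      have h2 : (t+1)/(t:ℝ) - 1 = 1/t := by field_simp; ring
      rw [Real.log_div (by positivity) (by positivity), h2] at hlog
      have := mul_le_mul_of_nonneg_left hlog (le_of_lt htpos)
      rw [mul_sub] at this
      have h3 : (t:ℝ) * (1/t) = 1 := by field_simp
      nlinarith
    push_cast
    nlinarith
lemma log_factorial_le (t : ℕ) :
    Real.log (Nat.factorial t) ≤ ((t:ℝ)+1) * Real.log ((t:ℝ)+1) - t := by
  induction t with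
  | zero => simp
  | succ t ih =>
    have h1 : Real.log (Nat.factorial (t+1)) = Real.log (Nat.factorial t) + Real.log ((t:ℝ)+1) := by
      rw [Nat.factorial_succ, Nat.cast_mul, Real.log_mul (by positivity) (by positivity)]
      push_cast; ring
    rw [h1]
    have key : 1 ≤ ((t:ℝ)+2) * (Real.log ((t:ℝ)+2) - Real.log ((t:ℝ)+1)) := by
      have hlog : Real.log (((t:ℝ)+1)/((t:ℝ)+2)) ≤ ((t:ℝ)+1)/((t:ℝ)+2) - 1 :=
        Real.log_le_sub_one_of_pos (by positivity)
      rw [Real.log_div (by positivity) (by positivity)] at hlog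
      have h2 : ((t:ℝ)+1)/((t:ℝ)+2) - 1 = -(1/((t:ℝ)+2)) := by field_simp; ring
      rw [h2] at hlog
      have h3 : (0:ℝ) < (t:ℝ)+2 := by positivity
      have := mul_le_mul_of_nonneg_left hlog (le_of_lt h3)
      have h4 : ((t:ℝ)+2) * (-(1/((t:ℝ)+2))) = -1 := by field_simp
      nlinarith
    push_cast
    have hre : ((t:ℝ)+1+1) = (t:ℝ)+2 := by ring
    rw [hre]
    nlinarith [key]




-- probabilistic upper bound on class size
lemma class_card_mul_le {N k : ℕ} (hN : 0 < N) (x₀ : Fin N → Fin k) :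
    (((univ : Finset (Fin N → Fin k)).filter (fun y => cnt y = cnt x₀)).card : ℝ) *
      ∏ i, ((cnt x₀ i : ℝ)/N)^(cnt x₀ i) ≤ 1 := by
  classical
  set w : Fin k → ℝ := fun i => (cnt x₀ i : ℝ)/N with hw
  have hwnn : ∀ i, 0 ≤ w i := fun i => by positivity
  have hsum : ∑ i, w i = 1 := by
    rw [← Finset.sum_div]
    rw [show ∑ i, ((cnt x₀ i : ℝ)) = (N : ℝ) by exact_mod_cast congrArg Nat.cast (cnt_sum x₀)]
    field_simp
  have key : ∀ y : Fin N → Fin k, cnt y = cnt x₀ → ∏ j, w (y j) = ∏ i, w i ^ (cnt x₀ i) := by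
    intro y hy
    rw [← Finset.prod_fiberwise_of_maps_to (g := y) (t := univ) (fun _ _ => mem_univ _)
      (fun j => w (y j))]
    apply Finset.prod_congr rfl
    intro i _
    have h1 : ∏ j ∈ univ.filter (fun j => y j = i), w (y j)
        = ∏ j ∈ univ.filter (fun j => y j = i), w i := by
      apply Finset.prod_congr rfl
      intro j hj
      simp only [mem_filter] at hj
      rw [hj.2]
    rw [h1, Finset.prod_const, ← hy]
    rfl
  calc (((univ : Finset (Fin N → Fin k)).filter (fun y => cnt y = cnt x₀)).card : ℝ) *
        ∏ i, w i ^ (cnt x₀ i)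
      = ∑ y ∈ (univ : Finset (Fin N → Fin k)).filter (fun y => cnt y = cnt x₀),
          ∏ j, w (y j) := by
        rw [Finset.sum_congr rfl (fun y hy => key y (by simpa using (Finset.mem_filter.mp hy).2)),
          Finset.sum_const, nsmul_eq_mul]
    _ ≤ ∑ y : Fin N → Fin k, ∏ j, w (y j) := by
        apply Finset.sum_le_sum_of_subset_of_nonneg (Finset.filter_subset _ _)
        intro y _ _
        exact Finset.prod_nonneg (fun j _ => hwnn (y j))
    _ = ∏ j : Fin N, ∑ i, w i := by
        rw [Finset.prod_univ_sum (t := fun _ : Fin N => (univ : Finset (Fin k)))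
          (f := fun _ i => w i), Fintype.piFinset_univ]
    _ = 1 := by rw [hsum]; simp



-- assume previously proven facts as hypotheses for modular testing
lemma log_class_bounds {N k : ℕ} (hN : 0 < N) (x₀ : Fin N → Fin k)
    (cnt_sum : ∑ i, cnt x₀ i = N)
    (cnt_le : ∀ i, cnt x₀ i ≤ N)
    (hub : (((univ : Finset (Fin N → Fin k)).filter (fun y => cnt y = cnt x₀)).card : ℝ) *
      ∏ i, ((cnt x₀ i : ℝ)/N)^(cnt x₀ i) ≤ 1)
    (hlb : Nat.factorial N ≤
      (∏ i, Nat.factorial (cnt x₀ i)) *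
        ((univ : Finset (Fin N → Fin k)).filter (fun y => cnt y = cnt x₀)).card)
    (log_factorial_ge : ∀ t : ℕ, (t : ℝ) * Real.log t - t ≤ Real.log (Nat.factorial t))
    (log_factorial_le : ∀ t : ℕ, Real.log (Nat.factorial t) ≤ ((t:ℝ)+1) * Real.log ((t:ℝ)+1) - t) :
    |Real.log (((univ : Finset (Fin N → Fin k)).filter (fun y => cnt y = cnt x₀)).card)
       - (N : ℝ) * ∑ i, Real.negMulLog ((cnt x₀ i : ℝ)/N)|
      ≤ k * (1 + Real.log (N+1)) := by
  classical
  set T : Fin k → ℕ := cnt x₀ with hT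
  set Nc := ((univ : Finset (Fin N → Fin k)).filter (fun y => cnt y = cnt x₀)).card with hNc
  have hNcpos : 0 < Nc := by
    rw [hNc]
    exact Finset.card_pos.mpr ⟨x₀, by simp⟩
  have hNR : (0:ℝ) < N := by exact_mod_cast hN
  -- key identity : N * Ĥ = N log N - ∑ T i log T i
  have hNH : (N : ℝ) * ∑ i, Real.negMulLog ((T i : ℝ)/N)
      = (N:ℝ) * Real.log N - ∑ i, (T i : ℝ) * Real.log (T i) := by
    have hterm : ∀ i, (N:ℝ) * Real.negMulLog ((T i : ℝ)/N)
        = (T i : ℝ) * Real.log N - (T i : ℝ) * Real.log (T i) := by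
      intro i
      rcases Nat.eq_zero_or_pos (T i) with h0 | hpos
      · simp [h0, Real.negMulLog]
      · have hTpos : (0:ℝ) < T i := by exact_mod_cast hpos
        rw [Real.negMulLog, Real.log_div (by positivity) (by positivity)]
        field_simp
        ring
    rw [Finset.mul_sum, Finset.sum_congr rfl (fun i _ => hterm i), Finset.sum_sub_distrib,
      ← Finset.sum_mul]
    congr 2
    exact_mod_cast cnt_sum
  rw [abs_le]
  constructor
  · -- lower bound on log Nc
    have h1 : Real.log (Nat.factorial N) ≤ Real.log ((∏ i, Nat.factorial (T i)) * Nc) := by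
      apply Real.log_le_log (by positivity)
      exact_mod_cast hlb
    rw [Real.log_mul (by positivity) (by exact_mod_cast hNcpos.ne'), Nat.cast_prod,
      Real.log_prod (fun i _ => by
        exact_mod_cast (Nat.factorial_pos (T i)).ne')] at h1
    have h2 : (N:ℝ) * Real.log N - N ≤ Real.log (Nat.factorial N) := log_factorial_ge N
    have h3 : ∀ i, Real.log (Nat.factorial (T i)) ≤ (T i : ℝ) * Real.log (T i) + 1
        + Real.log (N+1) - T i := by
      intro i
      have := log_factorial_le (T i)
      refine this.trans ?_
      -- (T+1) log (T+1) ≤ T log T + 1 + log (N+1)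
      have hTN : (T i : ℝ) + 1 ≤ (N:ℝ) + 1 := by
        have := cnt_le i; push_cast; linarith [show (T i :ℝ) ≤ N from by exact_mod_cast cnt_le i]
      have hlogTN : Real.log ((T i:ℝ)+1) ≤ Real.log ((N:ℝ)+1) :=
        Real.log_le_log (by positivity) hTN
      rcases Nat.eq_zero_or_pos (T i) with h0 | hpos
      · simp only [h0, Nat.cast_zero]
        simp
        linarith [Real.log_nonneg (show (1:ℝ) ≤ N+1 by linarith)]
      · have hTpos : (0:ℝ) < T i := by exact_mod_cast hpos
        have hstep : (T i : ℝ) * Real.log ((T i :ℝ)+1) ≤ (T i : ℝ) * Real.log (T i) + 1 := by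
          have hlog : Real.log (((T i:ℝ)+1)/(T i:ℝ)) ≤ ((T i:ℝ)+1)/(T i:ℝ) - 1 :=
            Real.log_le_sub_one_of_pos (by positivity)
          rw [Real.log_div (by positivity) (by positivity)] at hlog
          have h2' : ((T i:ℝ)+1)/(T i:ℝ) - 1 = 1/(T i:ℝ) := by field_simp; ring
          rw [h2'] at hlog
          have := mul_le_mul_of_nonneg_left hlog (le_of_lt hTpos)
          rw [mul_sub] at this
          have h3' : (T i:ℝ) * (1/(T i:ℝ)) = 1 := by field_simp
          nlinarith
        calc ((T i:ℝ)+1) * Real.log ((T i:ℝ)+1) - T i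
            = (T i:ℝ) * Real.log ((T i:ℝ)+1) + Real.log ((T i:ℝ)+1) - T i := by ring
          _ ≤ (T i:ℝ) * Real.log (T i) + 1 + Real.log ((N:ℝ)+1) - T i := by linarith
    have h4 : ∑ i, Real.log (Nat.factorial (T i))
        ≤ ∑ i, ((T i : ℝ) * Real.log (T i)) + k * (1 + Real.log (N+1)) - N := by
      calc ∑ i, Real.log (Nat.factorial (T i))
          ≤ ∑ i, ((T i : ℝ) * Real.log (T i) + 1 + Real.log (N+1) - T i) :=
            Finset.sum_le_sum (fun i _ => h3 i)
        _ = ∑ i, ((T i : ℝ) * Real.log (T i)) + k * (1 + Real.log (N+1)) - N := by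
            rw [Finset.sum_sub_distrib]
            have : ∑ i : Fin k, ((T i : ℝ)) = N := by exact_mod_cast cnt_sum
            rw [this]
            have : ∑ i : Fin k, ((T i : ℝ) * Real.log (T i) + 1 + Real.log (N+1))
                = ∑ i, ((T i : ℝ) * Real.log (T i)) + k * (1 + Real.log (N+1)) := by
              rw [Finset.sum_add_distrib, Finset.sum_add_distrib]
              simp [Finset.sum_const, Finset.card_univ]
              ring
            rw [this]
    rw [hNH]
    linarith
  · -- upper bound on log Nc : log Nc ≤ N Ĥ
    have hprodpos : (0:ℝ) < ∏ i, ((T i : ℝ)/N)^(T i) := by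
      apply Finset.prod_pos
      intro i _
      rcases Nat.eq_zero_or_pos (T i) with h0 | hpos
      · simp [h0]
      · have : (0:ℝ) < T i := by exact_mod_cast hpos
        positivity
    have h1 : Real.log ((Nc:ℝ) * ∏ i, ((T i : ℝ)/N)^(T i)) ≤ 0 := by
      have := Real.log_le_log (by positivity) hub
      simpa using this
    rw [Real.log_mul (by exact_mod_cast hNcpos.ne') hprodpos.ne',
      Real.log_prod (fun i _ => by
        rcases Nat.eq_zero_or_pos (T i) with h0 | hpos
        · simp [h0]
        · have : (0:ℝ) < T i := by exact_mod_cast hpos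
          positivity)] at h1
    have h2 : ∑ i, Real.log (((T i : ℝ)/N)^(T i))
        = ∑ i, ((T i:ℝ) * Real.log (T i)) - (N:ℝ) * Real.log N := by
      have hterm : ∀ i, Real.log (((T i : ℝ)/N)^(T i))
          = (T i:ℝ) * Real.log (T i) - (T i:ℝ) * Real.log N := by
        intro i
        rcases Nat.eq_zero_or_pos (T i) with h0 | hpos
        · simp [h0]
        · have hTpos : (0:ℝ) < T i := by exact_mod_cast hpos
          rw [Real.log_pow, Real.log_div (by positivity) (by positivity)]
          ring
      rw [Finset.sum_congr rfl (fun i _ => hterm i), Finset.sum_sub_distrib, ← Finset.sum_mul]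
      congr 2
      exact_mod_cast cnt_sum
    rw [h2] at h1
    rw [hNH]
    have hk : (0:ℝ) ≤ k * (1 + Real.log (N+1)) := by
      have : (0:ℝ) ≤ Real.log (N+1) := Real.log_nonneg (by push_cast; linarith)
      positivity
    linarith



lemma cnt_le' {N k : ℕ} (x : Fin N → Fin k) (i : Fin k) : cnt x i ≤ N := by
  unfold cnt
  calc (univ.filter (fun j => x j = i)).card ≤ (univ : Finset (Fin N)).card :=
        Finset.card_le_card (Finset.filter_subset _ _)
    _ = N := by simp

lemma ent_decomp {N k : ℕ} (hN : 0 < N) (r : (Fin N → Fin k) → ℝ)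
    (hrnn : ∀ x, 0 ≤ r x) (hrsum : ∑ x, r x = 1)
    (hconst : ∀ x y : Fin N → Fin k, cnt x = cnt y → r x = r y)
    (class_bd : ∀ x₀ : Fin N → Fin k,
      |Real.log (((univ : Finset (Fin N → Fin k)).filter (fun y => cnt y = cnt x₀)).card)
       - (N : ℝ) * ∑ i, Real.negMulLog ((cnt x₀ i : ℝ)/N)|
      ≤ k * (1 + Real.log (N+1))) :
    |∑ x, Real.negMulLog (r x)
      - (N:ℝ) * ∑ x, r x * ∑ i, Real.negMulLog ((cnt x i : ℝ)/N)|
      ≤ 2 * k * (1 + Real.log (N+1)) := by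
  classical
  set 𝒯 : Finset (Fin k → ℕ) := Finset.image cnt univ with h𝒯
  set q : (Fin k → ℕ) → ℝ := fun T => ∑ y ∈ univ.filter (fun y => cnt y = T), r y with hq
  set Nc : (Fin k → ℕ) → ℕ := fun T => (univ.filter (fun y : Fin N → Fin k => cnt y = T)).card
    with hNcdef
  have hqnn : ∀ T, 0 ≤ q T := fun T => Finset.sum_nonneg (fun y _ => hrnn y)
  have hqsum : ∑ T ∈ 𝒯, q T = 1 := by
    rw [hq, ← hrsum]
    exact Finset.sum_fiberwise_of_maps_to (fun x _ => Finset.mem_image_of_mem cnt (mem_univ x)) r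
  have hq1 : ∀ T, q T ≤ 1 := by
    intro T
    rcases Finset.decidableMem T 𝒯 with hT | hT
    · -- T ∉ 𝒯 : q T = 0
      have : univ.filter (fun y : Fin N → Fin k => cnt y = T) = ∅ := by
        rw [Finset.filter_eq_empty_iff]
        intro y _
        intro hc
        exact hT (by rw [← hc]; exact Finset.mem_image_of_mem cnt (mem_univ y))
      simp [hq, this]
    · rw [← hqsum]
      exact Finset.single_le_sum (fun T _ => hqnn T) hT
  have hr_eq : ∀ x : Fin N → Fin k, r x = q (cnt x) / Nc (cnt x) := by
    intro x
    have hx : x ∈ univ.filter (fun y : Fin N → Fin k => cnt y = cnt x) := by simp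
    have hNcpos : 0 < Nc (cnt x) := Finset.card_pos.mpr ⟨x, hx⟩
    have : q (cnt x) = (Nc (cnt x) : ℝ) * r x := by
      rw [hq]
      simp only
      rw [Finset.sum_congr rfl (fun y hy => hconst y x (by simpa using (Finset.mem_filter.mp hy).2)),
        Finset.sum_const, nsmul_eq_mul]
    rw [this]
    field_simp
  -- Part 1
  have part1 : ∑ x, Real.negMulLog (r x)
      = ∑ T ∈ 𝒯, (q T * Real.log (Nc T) + Real.negMulLog (q T)) := by
    rw [← Finset.sum_fiberwise_of_maps_to
      (fun x _ => Finset.mem_image_of_mem cnt (mem_univ x)) (fun x => Real.negMulLog (r x))]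
    apply Finset.sum_congr rfl
    intro T hT
    obtain ⟨x₀, _, hx₀⟩ := Finset.mem_image.mp hT
    have hNcpos : 0 < Nc T := Finset.card_pos.mpr ⟨x₀, by simp [hx₀]⟩
    have hNcR : (0:ℝ) < Nc T := by exact_mod_cast hNcpos
    have hin : ∀ y ∈ univ.filter (fun y : Fin N → Fin k => cnt y = T),
        Real.negMulLog (r y) = Real.negMulLog (q T / Nc T) := by
      intro y hy
      have := (Finset.mem_filter.mp hy).2
      rw [hr_eq y, this]
    rw [Finset.sum_congr rfl hin, Finset.sum_const, nsmul_eq_mul]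
    rcases eq_or_lt_of_le (hqnn T) with h0 | hpos
    · simp [← h0]
    · rw [Real.negMulLog, Real.negMulLog, Real.log_div hpos.ne' hNcR.ne']
      field_simp
      ring
  -- Part 2
  have part2 : ∑ x, r x * ∑ i, Real.negMulLog ((cnt x i : ℝ)/N)
      = ∑ T ∈ 𝒯, q T * ∑ i, Real.negMulLog ((T i : ℝ)/N) := by
    rw [← Finset.sum_fiberwise_of_maps_to
      (fun x _ => Finset.mem_image_of_mem cnt (mem_univ x))]
    apply Finset.sum_congr rfl
    intro T hT
    rw [hq]
    simp only
    rw [Finset.sum_mul]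
    apply Finset.sum_congr rfl
    intro y hy
    have := (Finset.mem_filter.mp hy).2
    rw [this]
  -- Part 3
  have part3 : |∑ T ∈ 𝒯, q T * Real.log (Nc T)
      - (N:ℝ) * ∑ T ∈ 𝒯, q T * ∑ i, Real.negMulLog ((T i : ℝ)/N)|
      ≤ k * (1 + Real.log (N+1)) := by
    rw [Finset.mul_sum, ← Finset.sum_sub_distrib]
    calc |∑ T ∈ 𝒯, (q T * Real.log (Nc T) - (N:ℝ) * (q T * ∑ i, Real.negMulLog ((T i : ℝ)/N)))|
        ≤ ∑ T ∈ 𝒯, |q T * Real.log (Nc T) - (N:ℝ) * (q T * ∑ i, Real.negMulLog ((T i : ℝ)/N))| :=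
          Finset.abs_sum_le_sum_abs _ _
      _ ≤ ∑ T ∈ 𝒯, q T * (k * (1 + Real.log (N+1))) := by
          apply Finset.sum_le_sum
          intro T hT
          obtain ⟨x₀, _, hx₀⟩ := Finset.mem_image.mp hT
          have : q T * Real.log (Nc T) - (N:ℝ) * (q T * ∑ i, Real.negMulLog ((T i : ℝ)/N))
              = q T * (Real.log (Nc T) - (N:ℝ) * ∑ i, Real.negMulLog ((T i : ℝ)/N)) := by ring
          rw [this, abs_mul, abs_of_nonneg (hqnn T)]
          apply mul_le_mul_of_nonneg_left _ (hqnn T)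
          have := class_bd x₀
          rw [hx₀] at this
          exact this
      _ = k * (1 + Real.log (N+1)) := by
          rw [← Finset.sum_mul, hqsum, one_mul]
  -- Part 4 : entropy of q between 0 and k log (N+1)
  have hlogN1 : (0:ℝ) ≤ Real.log (N+1) := Real.log_nonneg (by push_cast; linarith)
  have part4a : 0 ≤ ∑ T ∈ 𝒯, Real.negMulLog (q T) :=
    Finset.sum_nonneg (fun T _ => Real.negMulLog_nonneg (hqnn T) (hq1 T))
  have part4b : ∑ T ∈ 𝒯, Real.negMulLog (q T) ≤ k * (1 + Real.log (N+1)) := by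
    set t := 𝒯.filter (fun T => q T ≠ 0) with ht
    have hsum_t : ∑ T ∈ t, q T = 1 := by rw [ht, Finset.sum_filter_ne_zero, hqsum]
    have htne : t.Nonempty := by
      by_contra h
      rw [Finset.not_nonempty_iff_eq_empty] at h
      rw [h, Finset.sum_empty] at hsum_t
      norm_num at hsum_t
    have hqpos : ∀ T ∈ t, 0 < q T := by
      intro T hTt
      rcases (Finset.mem_filter.mp hTt) with ⟨_, hne⟩
      exact lt_of_le_of_ne (hqnn T) (Ne.symm hne)
    have jensen : ∑ T ∈ t, q T • Real.log ((q T)⁻¹)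
        ≤ Real.log (∑ T ∈ t, q T • (q T)⁻¹) := by
      apply ConcaveOn.le_map_sum (strictConcaveOn_log_Ioi.concaveOn)
        (fun T _ => hqnn T) hsum_t
      intro T hTt
      exact Set.mem_Ioi.mpr (inv_pos.mpr (hqpos T hTt))
    have hrhs : ∑ T ∈ t, q T • (q T)⁻¹ = (t.card : ℝ) := by
      rw [Finset.sum_congr rfl (fun T hTt => by
        rw [smul_eq_mul, mul_inv_cancel₀ (hqpos T hTt).ne'])]
      simp
    have hlhs : ∑ T ∈ 𝒯, Real.negMulLog (q T) = ∑ T ∈ t, q T • Real.log ((q T)⁻¹) := by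
      rw [ht, Finset.sum_filter_of_ne]
      · apply Finset.sum_congr rfl
        intro T _
        rw [Real.negMulLog, smul_eq_mul, Real.log_inv]
        ring
      · intro T _ hne
        intro h0
        apply hne
        rw [h0]
        simp
    have hcard : (t.card : ℝ) ≤ ((N:ℝ)+1)^k := by
      have h1 : t.card ≤ (Finset.univ : Finset (Fin k → Fin (N+1))).card := by
        apply Finset.card_le_card_of_injOn
          (fun T => (fun i => (⟨min (T i) N, by omega⟩ : Fin (N+1))))
        · intro T _; exact mem_univ _
        · intro T hTt S hSt hTS
          have hmem : ∀ U ∈ t, ∀ i, U i ≤ N := by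
            intro U hU i
            have hU𝒯 : U ∈ 𝒯 := (Finset.mem_filter.mp hU).1
            obtain ⟨x₀, _, hx₀⟩ := Finset.mem_image.mp hU𝒯
            rw [← hx₀]
            exact cnt_le' x₀ i
          funext i
          have := congrArg (fun f => (f i : Fin (N+1)).val) hTS
          simp only at this
          have hT' := hmem T hTt i
          have hS' := hmem S hSt i
          omega
      have h2 : ((Finset.univ : Finset (Fin k → Fin (N+1))).card : ℝ) = ((N:ℝ)+1)^k := by
        rw [Finset.card_univ, Fintype.card_fun]
        push_cast
        simp
      calc (t.card : ℝ) ≤ ((Finset.univ : Finset (Fin k → Fin (N+1))).card : ℝ) := by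
            exact_mod_cast h1
        _ = ((N:ℝ)+1)^k := h2
    rw [hlhs]
    calc ∑ T ∈ t, q T • Real.log ((q T)⁻¹) ≤ Real.log (t.card) := by rw [← hrhs]; exact jensen
      _ ≤ Real.log (((N:ℝ)+1)^k) := by
          apply Real.log_le_log (by exact_mod_cast Finset.card_pos.mpr htne) hcard
      _ = k * Real.log ((N:ℝ)+1) := by
          rw [Real.log_pow]
      _ ≤ k * (1 + Real.log (N+1)) := by
          have : (0:ℝ) ≤ k := by positivity
          nlinarith
  -- combine
  rw [part1, part2]
  have : ∑ T ∈ 𝒯, (q T * Real.log (Nc T) + Real.negMulLog (q T))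
      = (∑ T ∈ 𝒯, q T * Real.log (Nc T)) + ∑ T ∈ 𝒯, Real.negMulLog (q T) := by
    rw [Finset.sum_add_distrib]
  rw [this]
  have habs := abs_add_le (∑ T ∈ 𝒯, q T * Real.log (Nc T)
      - (N:ℝ) * ∑ T ∈ 𝒯, q T * ∑ i, Real.negMulLog ((T i : ℝ)/N))
    (∑ T ∈ 𝒯, Real.negMulLog (q T))
  have h2 : |∑ T ∈ 𝒯, Real.negMulLog (q T)| ≤ k * (1 + Real.log (N+1)) := by
    rw [abs_of_nonneg part4a]; exact part4b
  calc |∑ T ∈ 𝒯, q T * Real.log (Nc T) + ∑ T ∈ 𝒯, Real.negMulLog (q T)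
      - (N:ℝ) * ∑ T ∈ 𝒯, q T * ∑ i, Real.negMulLog ((T i : ℝ)/N)|
      = |(∑ T ∈ 𝒯, q T * Real.log (Nc T)
      - (N:ℝ) * ∑ T ∈ 𝒯, q T * ∑ i, Real.negMulLog ((T i : ℝ)/N))
      + ∑ T ∈ 𝒯, Real.negMulLog (q T)| := by congr 1; ring
    _ ≤ _ := habs
    _ ≤ k * (1 + Real.log (N+1)) + k * (1 + Real.log (N+1)) := add_le_add part3 h2
    _ = 2 * k * (1 + Real.log (N+1)) := by ring



lemma meas_toReal_sum {X : Type*} [Fintype X] [MeasurableSpace X] [MeasurableSingletonClass X]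
    (M : Measure X) [IsProbabilityMeasure M] (A : Finset X) :
    (M (A : Set X)).toReal = ∑ x ∈ A, (M {x}).toReal := by
  have h1 : (A : Set X) = ⋃ x ∈ A, {x} := by ext x; simp
  rw [h1, measure_biUnion_finset ?hd (fun x _ => measurableSet_singleton x)]
  · exact ENNReal.toReal_sum (fun x _ => measure_ne_top M {x})
  · intro x _ y _ hxy
    simp [Function.onFun, Set.disjoint_singleton, hxy]

lemma sym_preimage {n k : ℕ} (μ : Measure (Fin n → Fin k))
    (hsym : ∀ π : Equiv.Perm (Fin n), Measure.map (fun s => s ∘ π) μ = μ)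
    (π : Equiv.Perm (Fin n)) (A : Set (Fin n → Fin k)) :
    μ ((fun s => s ∘ ⇑π) ⁻¹' A) = μ A := by
  have hmeas : Measurable (fun s : Fin n → Fin k => s ∘ ⇑π) :=
    measurable_pi_lambda _ (fun j => measurable_pi_apply _)
  conv_rhs => rw [← hsym π]
  rw [Measure.map_apply hmeas (Set.to_countable A).measurableSet]

section
variable {n k : ℕ} (μ : Measure (Fin (n+1) → Fin k)) [IsProbabilityMeasure μ]
  (hsym : ∀ π : Equiv.Perm (Fin (n+1)), Measure.map (fun s => s ∘ π) μ = μ) (i : Fin k)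

-- generic indicator-set identity
lemma sum_r_indicator (P : (Fin (n+1) → Fin k) → Prop) [DecidablePred P] :
    ∑ x ∈ univ.filter P, (μ {x}).toReal = (μ {x | P x}).toReal := by
  rw [← meas_toReal_sum]
  congr 1
  congr 1
  ext x
  simp

include hsym in
lemma single_site (j : Fin (n+1)) :
    μ {x | x j = i} = μ {x | x 0 = i} := by
  have h := sym_preimage μ hsym (Equiv.swap 0 j) {x | x 0 = i}
  have hset : ((fun s : Fin (n+1) → Fin k => s ∘ ⇑(Equiv.swap 0 j)) ⁻¹' {x | x 0 = i})
      = {x | x j = i} := by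
    ext s
    simp [Equiv.swap_apply_left]
  rw [hset] at h
  exact h

include hsym in
lemma pair_site {j j' : Fin (n+1)} (hjj : j ≠ j') :
    μ {x | x j = i ∧ x j' = i} = μ {x | x 0 = i ∧ x 1 = i} := by
  have hn : 1 ≤ n := by
    by_contra h
    have hn0 : n = 0 := by omega
    subst hn0
    have h1 := j.isLt
    have h2 := j'.isLt
    exact hjj (Fin.ext (by omega))
  have h01 : (0 : Fin (n+1)) ≠ 1 := by
    intro h
    have := congrArg Fin.val h
    simp [Fin.val_one, hn] at this
    omega
  set τ := Equiv.swap (0 : Fin (n+1)) j with hτ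
  set c := τ.symm j' with hc
  have hτ0 : τ 0 = j := Equiv.swap_apply_left _ _
  have hc0 : c ≠ 0 := by
    intro h
    apply hjj
    rw [← hτ0, ← h, hc, Equiv.apply_symm_apply]
  set π := (Equiv.swap (1 : Fin (n+1)) c).trans τ with hπ
  have hπ0 : π 0 = j := by
    rw [hπ]
    simp only [Equiv.trans_apply]
    rw [Equiv.swap_apply_of_ne_of_ne h01 (Ne.symm hc0)]
    exact hτ0
  have hπ1 : π 1 = j' := by
    rw [hπ]
    simp only [Equiv.trans_apply]
    rw [Equiv.swap_apply_left, hc, Equiv.apply_symm_apply]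
  have h := sym_preimage μ hsym π {x | x 0 = i ∧ x 1 = i}
  have hset : ((fun s : Fin (n+1) → Fin k => s ∘ ⇑π) ⁻¹' {x | x 0 = i ∧ x 1 = i})
      = {x | x j = i ∧ x j' = i} := by
    ext s
    simp [hπ0, hπ1]
  rw [hset] at h
  exact h

include hsym in
lemma moment1 :
    ∑ x : Fin (n+1) → Fin k, (μ {x}).toReal * (cnt x i : ℝ)
      = (n+1 : ℝ) * (μ {x | x 0 = i}).toReal := by
  classical
  have step1 : ∀ x : Fin (n+1) → Fin k, ((cnt x i : ℝ))
      = ∑ j : Fin (n+1), (if x j = i then (1:ℝ) else 0) := by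
    intro x
    rw [cnt, Finset.card_filter]
    push_cast
    simp
  calc ∑ x : Fin (n+1) → Fin k, (μ {x}).toReal * (cnt x i : ℝ)
      = ∑ x : Fin (n+1) → Fin k, ∑ j, (if x j = i then (μ {x}).toReal else 0) := by
        apply Finset.sum_congr rfl
        intro x _
        rw [step1, Finset.mul_sum]
        apply Finset.sum_congr rfl
        intro j _
        split <;> simp
    _ = ∑ j : Fin (n+1), ∑ x : Fin (n+1) → Fin k, (if x j = i then (μ {x}).toReal else 0) :=
        Finset.sum_comm
    _ = ∑ j : Fin (n+1), (μ {x | x j = i}).toReal := by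
        apply Finset.sum_congr rfl
        intro j _
        rw [← sum_r_indicator μ (fun x => x j = i), Finset.sum_filter]
    _ = ∑ j : Fin (n+1), (μ {x | x 0 = i}).toReal := by
        apply Finset.sum_congr rfl
        intro j _
        rw [single_site μ hsym i j]
    _ = (n+1 : ℝ) * (μ {x | x 0 = i}).toReal := by
        rw [Finset.sum_const]
        simp

include hsym in
lemma moment2 :
    ∑ x : Fin (n+1) → Fin k, (μ {x}).toReal * (cnt x i : ℝ)^2
      = (n+1 : ℝ) * (μ {x | x 0 = i}).toReal
        + ((n+1 : ℝ) * n) * (μ {x | x 0 = i ∧ x 1 = i}).toReal := by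
  classical
  have step1 : ∀ x : Fin (n+1) → Fin k, ((cnt x i : ℝ))^2
      = ∑ j : Fin (n+1), ∑ j' : Fin (n+1),
          (if x j = i ∧ x j' = i then (1:ℝ) else 0) := by
    intro x
    have h1 : ((cnt x i : ℝ)) = ∑ j : Fin (n+1), (if x j = i then (1:ℝ) else 0) := by
      rw [cnt, Finset.card_filter]; push_cast; simp
    rw [pow_two, h1, Finset.sum_mul_sum]
    apply Finset.sum_congr rfl; intro j _
    apply Finset.sum_congr rfl; intro j' _
    by_cases hj : x j = i <;> by_cases hj' : x j' = i <;> simp [hj, hj']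
  calc ∑ x : Fin (n+1) → Fin k, (μ {x}).toReal * (cnt x i : ℝ)^2
      = ∑ x : Fin (n+1) → Fin k, ∑ j : Fin (n+1), ∑ j' : Fin (n+1),
          (if x j = i ∧ x j' = i then (μ {x}).toReal else 0) := by
        apply Finset.sum_congr rfl
        intro x _
        rw [step1, Finset.mul_sum]
        apply Finset.sum_congr rfl
        intro j _
        rw [Finset.mul_sum]
        apply Finset.sum_congr rfl
        intro j' _
        split <;> simp
    _ = ∑ j : Fin (n+1), ∑ j' : Fin (n+1), ∑ x : Fin (n+1) → Fin k,
          (if x j = i ∧ x j' = i then (μ {x}).toReal else 0) := by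
        rw [Finset.sum_comm]
        apply Finset.sum_congr rfl
        intro j _
        rw [Finset.sum_comm]
    _ = ∑ j : Fin (n+1), ∑ j' : Fin (n+1), (μ {x | x j = i ∧ x j' = i}).toReal := by
        apply Finset.sum_congr rfl; intro j _
        apply Finset.sum_congr rfl; intro j' _
        rw [← sum_r_indicator μ (fun x => x j = i ∧ x j' = i), Finset.sum_filter]
    _ = (n+1 : ℝ) * (μ {x | x 0 = i}).toReal
        + ((n+1 : ℝ) * n) * (μ {x | x 0 = i ∧ x 1 = i}).toReal := by
        have hsplit : ∀ j : Fin (n+1), ∑ j' : Fin (n+1), (μ {x | x j = i ∧ x j' = i}).toReal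
            = (μ {x | x 0 = i}).toReal + n * (μ {x | x 0 = i ∧ x 1 = i}).toReal := by
          intro j
          rw [← Finset.add_sum_erase _ _ (mem_univ j)]
          congr 1
          · rw [show {x : Fin (n+1) → Fin k | x j = i ∧ x j = i} = {x | x j = i} from by
              ext x; simp]
            rw [single_site μ hsym i j]
          · rw [Finset.sum_congr rfl (fun j' hj' => by
              rw [pair_site μ hsym i (Ne.symm (Finset.ne_of_mem_erase hj'))])]
            rw [Finset.sum_const, Finset.card_erase_of_mem (mem_univ j)]
            simp
        rw [Finset.sum_congr rfl (fun j _ => hsplit j), Finset.sum_add_distrib]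
        simp [Finset.sum_const]
        ring
end


lemma negMulLog_le_one {y : ℝ} (h0 : 0 ≤ y) (h1 : y ≤ 1) : Real.negMulLog y ≤ 1 := by
  rcases eq_or_lt_of_le h0 with h | h
  · simp [← h]
  · have hlog : Real.log y⁻¹ ≤ y⁻¹ - 1 := Real.log_le_sub_one_of_pos (by positivity)
    have : Real.negMulLog y = y * Real.log y⁻¹ := by
      rw [Real.negMulLog, Real.log_inv]; ring
    rw [this]
    have h2 : y * Real.log y⁻¹ ≤ y * (y⁻¹ - 1) := by
      apply mul_le_mul_of_nonneg_left hlog h0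
    have h3 : y * (y⁻¹ - 1) = 1 - y := by field_simp
    linarith

lemma tendsto_sum_negMulLog {κ : ℕ → Type*} [∀ n, Fintype (κ n)]
    (r : ∀ n, κ n → ℝ) (Y : ∀ n, κ n → ℝ) (c : ℝ)
    (hr0 : ∀ n x, 0 ≤ r n x) (hr1 : ∀ n, ∑ x, r n x = 1)
    (hY0 : ∀ n x, 0 ≤ Y n x) (hY1 : ∀ n x, Y n x ≤ 1) (hc0 : 0 ≤ c) (hc1 : c ≤ 1)
    (hV : Tendsto (fun n => ∑ x, r n x * (Y n x - c)^2) atTop (𝓝 0)) :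
    Tendsto (fun n => ∑ x, r n x * Real.negMulLog (Y n x)) atTop (𝓝 (Real.negMulLog c)) := by
  classical
  rw [Metric.tendsto_atTop]
  intro ε hε
  -- uniform continuity of negMulLog on [0,1]
  have huc : UniformContinuousOn Real.negMulLog (Set.Icc 0 1) :=
    isCompact_Icc.uniformContinuousOn_of_continuous Real.continuous_negMulLog.continuousOn
  rw [Metric.uniformContinuousOn_iff] at huc
  obtain ⟨δ, hδ, hδ'⟩ := huc (ε/2) (by positivity)
  -- eventually V n small
  have hVsmall : ∀ᶠ n in atTop, ∑ x, r n x * (Y n x - c)^2 < (ε/4) * δ^2 := by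
    have := hV.eventually (eventually_lt_nhds (show (0:ℝ) < (ε/4) * δ^2 by positivity))
    simpa using this
  rw [eventually_atTop] at hVsmall
  obtain ⟨M, hM⟩ := hVsmall
  refine ⟨M, fun n hn => ?_⟩
  have hVn := hM n hn
  have hVnn : ∀ x, 0 ≤ r n x * (Y n x - c)^2 := fun x => mul_nonneg (hr0 n x) (sq_nonneg _)
  -- difference bound
  have key : dist (∑ x, r n x * Real.negMulLog (Y n x)) (Real.negMulLog c)
      ≤ ε/2 + (∑ x, r n x * (Y n x - c)^2) / δ^2 := by
    rw [Real.dist_eq]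
    have h1 : ∑ x, r n x * Real.negMulLog (Y n x) - Real.negMulLog c
        = ∑ x, r n x * (Real.negMulLog (Y n x) - Real.negMulLog c) := by
      rw [Finset.sum_congr rfl (fun x _ => by ring : ∀ x ∈ univ,
        r n x * (Real.negMulLog (Y n x) - Real.negMulLog c)
          = r n x * Real.negMulLog (Y n x) - r n x * Real.negMulLog c)]
      rw [Finset.sum_sub_distrib, ← Finset.sum_mul, hr1 n, one_mul]
    rw [h1]
    calc |∑ x, r n x * (Real.negMulLog (Y n x) - Real.negMulLog c)|
        ≤ ∑ x, |r n x * (Real.negMulLog (Y n x) - Real.negMulLog c)| :=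
          Finset.abs_sum_le_sum_abs _ _
      _ = ∑ x, r n x * |Real.negMulLog (Y n x) - Real.negMulLog c| := by
          apply Finset.sum_congr rfl
          intro x _
          rw [abs_mul, abs_of_nonneg (hr0 n x)]
      _ ≤ ∑ x ∈ univ.filter (fun x => dist (Y n x) c < δ), r n x * (ε/2)
          + ∑ x ∈ univ.filter (fun x => ¬ dist (Y n x) c < δ), r n x * 1 := by
          rw [← Finset.sum_filter_add_sum_filter_not univ (fun x => dist (Y n x) c < δ)]
          apply add_le_add
          · apply Finset.sum_le_sum
            intro x hx
            apply mul_le_mul_of_nonneg_left _ (hr0 n x)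
            have := hδ' (Y n x) (Set.mem_Icc.mpr ⟨hY0 n x, hY1 n x⟩) c
              (Set.mem_Icc.mpr ⟨hc0, hc1⟩) (Finset.mem_filter.mp hx).2
            rw [Real.dist_eq] at this
            exact this.le
          · apply Finset.sum_le_sum
            intro x _
            apply mul_le_mul_of_nonneg_left _ (hr0 n x)
            have ha := Real.negMulLog_nonneg (hY0 n x) (hY1 n x)
            have hb := negMulLog_le_one (hY0 n x) (hY1 n x)
            have hc' := Real.negMulLog_nonneg hc0 hc1
            have hd := negMulLog_le_one hc0 hc1
            rw [abs_le]
            constructor <;> linarith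
      _ ≤ ε/2 + (∑ x, r n x * (Y n x - c)^2) / δ^2 := by
          apply add_le_add
          · rw [← Finset.sum_mul]
            have : ∑ x ∈ univ.filter (fun x => dist (Y n x) c < δ), r n x ≤ 1 := by
              rw [← hr1 n]
              apply Finset.sum_le_sum_of_subset_of_nonneg (Finset.filter_subset _ _)
              intro x _ _
              exact hr0 n x
            nlinarith
          · rw [← Finset.sum_mul, mul_one]
            have hδ2 : (0:ℝ) < δ^2 := by positivity
            rw [le_div_iff₀ hδ2]
            calc (∑ x ∈ univ.filter (fun x => ¬ dist (Y n x) c < δ), r n x) * δ^2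
                = ∑ x ∈ univ.filter (fun x => ¬ dist (Y n x) c < δ), r n x * δ^2 :=
                  Finset.sum_mul _ _ _
              _ ≤ ∑ x ∈ univ.filter (fun x => ¬ dist (Y n x) c < δ), r n x * (Y n x - c)^2 := by
                  apply Finset.sum_le_sum
                  intro x hx
                  apply mul_le_mul_of_nonneg_left _ (hr0 n x)
                  have habs : δ ≤ |Y n x - c| := by
                    have := (Finset.mem_filter.mp hx).2
                    rw [not_lt, Real.dist_eq] at this
                    exact this
                  calc δ^2 ≤ |Y n x - c|^2 := by
                        apply pow_le_pow_left₀ hδ.le habs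
                    _ = (Y n x - c)^2 := sq_abs _
              _ ≤ ∑ x, r n x * (Y n x - c)^2 := by
                  apply Finset.sum_le_sum_of_subset_of_nonneg (Finset.filter_subset _ _)
                  intro x _ _
                  exact hVnn x
  refine lt_of_le_of_lt key ?_
  have hδ2 : (0:ℝ) < δ^2 := by positivity
  have hVd : (∑ x, r n x * (Y n x - c)^2) / δ^2 < ε/4 := by
    rw [div_lt_iff₀ hδ2]
    linarith
  linarith



lemma lim1 {k : ℕ} (ρ : ∀ n, Measure (Fin n → Fin k)) (p : Fin k → ℝ) (hchaos : ∀ (m : ℕ) (z : Fin m → Fin k),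
      Tendsto
        (fun n => (ρ (m + n + 1) {s | ∀ i : Fin m, s (Fin.castLE (by omega) i) = z i}).toReal)
        atTop (𝓝 (∏ i : Fin m, p (z i)))) (i : Fin k) :
    Tendsto (fun n => (ρ (n + 1)
        {s : Fin (n+1) → Fin k | ∀ j : Fin (n+1), j.val = 0 → s j = i}).toReal)
      atTop (𝓝 (p i)) := by
  have h := hchaos 1 ![i]
  have hset : ∀ n : ℕ,
      {s : Fin (1 + n + 1) → Fin k | ∀ j : Fin 1, s (Fin.castLE (by omega) j) = ![i] j}
        = {s : Fin (1 + n + 1) → Fin k | ∀ j : Fin (1 + n + 1), j.val = 0 → s j = i} := by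
    intro n
    ext s
    simp only [Set.mem_setOf_eq]
    constructor
    · intro hs j hj
      have h0 := hs 0
      simp only [Matrix.cons_val_zero] at h0
      have : j = Fin.castLE (by omega) (0 : Fin 1) := by
        apply Fin.ext
        simpa using hj
      rw [this]
      exact h0
    · intro hs j
      have hj1 : j = 0 := by omega
      subst hj1
      rw [hs (Fin.castLE (by omega) (0 : Fin 1)) (by simp)]
      simp
  have hval : (∏ j : Fin 1, p (![i] j)) = p i := by simp
  rw [hval] at h
  have heq : (fun n => (ρ (1 + n + 1)
      {s : Fin (1 + n + 1) → Fin k | ∀ j : Fin 1, s (Fin.castLE (by omega) j) = ![i] j}).toReal)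
      = (fun n => (ρ ((n + 1) + 1)
        {s : Fin ((n+1)+1) → Fin k | ∀ j : Fin ((n+1)+1), j.val = 0 → s j = i}).toReal) := by
    funext n
    rw [hset n]
    have : 1 + n + 1 = (n + 1) + 1 := by omega
    congr 1 <;> rw [this]
  rw [heq] at h
  exact (tendsto_add_atTop_iff_nat 1).mp h



lemma lim2 {k : ℕ} (ρ : ∀ n, Measure (Fin n → Fin k)) (p : Fin k → ℝ) (hchaos : ∀ (m : ℕ) (z : Fin m → Fin k),
      Tendsto
        (fun n => (ρ (m + n + 1) {s | ∀ i : Fin m, s (Fin.castLE (by omega) i) = z i}).toReal)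
        atTop (𝓝 (∏ i : Fin m, p (z i)))) (i : Fin k) :
    Tendsto (fun n => (ρ (n + 1)
        {s : Fin (n+1) → Fin k | ∀ j : Fin (n+1),
          (j.val = 0 → s j = i) ∧ (j.val = 1 → s j = i)}).toReal)
      atTop (𝓝 (p i * p i)) := by
  have h := hchaos 2 ![i, i]
  have hset : ∀ n : ℕ,
      {s : Fin (2 + n + 1) → Fin k | ∀ j : Fin 2, s (Fin.castLE (by omega) j) = ![i, i] j}
        = {s : Fin (2 + n + 1) → Fin k | ∀ j : Fin (2 + n + 1),
            (j.val = 0 → s j = i) ∧ (j.val = 1 → s j = i)} := by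
    intro n
    ext s
    simp only [Set.mem_setOf_eq]
    constructor
    · intro hs j
      constructor
      · intro hj
        have h0 := hs 0
        simp only [Matrix.cons_val_zero] at h0
        have : j = Fin.castLE (by omega) (0 : Fin 2) := by apply Fin.ext; simpa using hj
        rw [this]; exact h0
      · intro hj
        have h1 := hs 1
        simp only [Matrix.cons_val_one, Matrix.head_cons] at h1
        have : j = Fin.castLE (by omega) (1 : Fin 2) := by apply Fin.ext; simpa using hj
        rw [this]; exact h1
    · intro hs j
      have : j.val = 0 ∨ j.val = 1 := by omega
      rcases this with hj | hj
      · rw [show (![i,i] j) = i from by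
          have : j = 0 := by apply Fin.ext; simpa using hj
          rw [this]; simp]
        exact (hs (Fin.castLE (by omega) j)).1 (by simpa using hj)
      · rw [show (![i,i] j) = i from by
          have : j = 1 := by apply Fin.ext; simpa using hj
          rw [this]; simp]
        exact (hs (Fin.castLE (by omega) j)).2 (by simpa using hj)
  have hval : (∏ j : Fin 2, p (![i, i] j)) = p i * p i := by
    rw [Fin.prod_univ_two]; simp
  rw [hval] at h
  have heq : (fun n => (ρ (2 + n + 1)
      {s : Fin (2 + n + 1) → Fin k | ∀ j : Fin 2, s (Fin.castLE (by omega) j) = ![i, i] j}).toReal)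
      = (fun n => (ρ ((n + 2) + 1)
        {s : Fin ((n+2)+1) → Fin k | ∀ j : Fin ((n+2)+1),
          (j.val = 0 → s j = i) ∧ (j.val = 1 → s j = i)}).toReal) := by
    funext n
    rw [hset n]
    have : 2 + n + 1 = (n + 2) + 1 := by omega
    congr 1 <;> rw [this]
  rw [heq] at h
  exact (tendsto_add_atTop_iff_nat 2).mp h

lemma sum_r_eq_one {X : Type*} [Fintype X] [MeasurableSpace X] [MeasurableSingletonClass X]
    (M : MeasureTheory.Measure X) [MeasureTheory.IsProbabilityMeasure M] :
    ∑ x : X, (M {x}).toReal = 1 := by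
  have := meas_toReal_sum M (Finset.univ : Finset X)
  rw [Finset.coe_univ] at this
  rw [← this, MeasureTheory.measure_univ, ENNReal.toReal_one]

/-- (Convergence of specific entropy) On a finite state space, if `{ρ_n}` is `p`-chaotic then the
specific entropy converges to the entropy of `p`. -/
theorem stmt9 (k : ℕ) (ρ : ∀ n, Measure (Fin n → Fin k))
    (hprob : ∀ n, IsProbabilityMeasure (ρ n))
    (hsym : ∀ n, IsSymmetricLaw (ρ n))
    (p : Fin k → ℝ) (hp0 : ∀ i, 0 ≤ p i) (hp1 : ∑ i : Fin k, p i = 1)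
    (hchaos : ∀ (m : ℕ) (z : Fin m → Fin k),
      Tendsto
        (fun n => (ρ (m + n + 1) {s | ∀ i : Fin m, s (Fin.castLE (by omega) i) = z i}).toReal)
        atTop (𝓝 (∏ i : Fin m, p (z i)))) :
    Tendsto
      (fun n : ℕ => -(1 / ((n : ℝ) + 1)) *
        ∑ x : Fin (n + 1) → Fin k, (ρ (n + 1) {x}).toReal * Real.log (ρ (n + 1) {x}).toReal)
      atTop (𝓝 (-∑ i : Fin k, p i * Real.log (p i))) := by
  classical
  have hsym' : ∀ n, ∀ π : Equiv.Perm (Fin n), Measure.map (fun s => s ∘ π) (ρ n) = ρ n := hsym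
  have hp_le_one : ∀ i, p i ≤ 1 := by
    intro i
    rw [← hp1]
    exact Finset.single_le_sum (fun j _ => hp0 j) (mem_univ i)
  -- notation
  set r : ∀ n : ℕ, (Fin (n+1) → Fin k) → ℝ := fun n x => (ρ (n+1) {x}).toReal with hr
  have hrnn : ∀ n x, 0 ≤ r n x := fun n x => ENNReal.toReal_nonneg
  have hrsum : ∀ n, ∑ x, r n x = 1 := by
    intro n
    haveI := hprob (n+1)
    exact sum_r_eq_one (ρ (n+1))
  have hconst : ∀ n, ∀ x y : Fin (n+1) → Fin k, cnt x = cnt y → r n x = r n y := by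
    intro n x y hc
    obtain ⟨π, hπ⟩ := exists_perm_of_cnt_eq hc
    have hpre : ((fun s : Fin (n+1) → Fin k => s ∘ ⇑π) ⁻¹' {y ∘ ⇑π}) = {y} := by
      ext s
      simp only [Set.mem_preimage, Set.mem_singleton_iff]
      constructor
      · intro h
        funext j
        have := congrFun h (π.symm j)
        simpa using this
      · intro h; rw [h]
    have h2 := sym_preimage (ρ (n+1)) (hsym' (n+1)) π {y ∘ ⇑π}
    rw [hpre] at h2
    rw [hr]
    simp only
    rw [← hπ, ← h2]
  -- the expected empirical entropy
  set E : ℕ → ℝ := fun n => ∑ x : Fin (n+1) → Fin k,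
      r n x * ∑ i, Real.negMulLog ((cnt x i : ℝ)/(n+1)) with hE
  set F : ℕ → ℝ := fun n => (1/((n:ℝ)+1)) * ∑ x : Fin (n+1) → Fin k,
      Real.negMulLog (r n x) with hF
  -- Step: goal function equals F
  have hFeq : (fun n : ℕ => -(1 / ((n : ℝ) + 1)) *
      ∑ x : Fin (n + 1) → Fin k, (ρ (n + 1) {x}).toReal * Real.log (ρ (n + 1) {x}).toReal) = F := by
    funext n
    rw [hF]
    have hsum : ∑ x : Fin (n+1) → Fin k, Real.negMulLog (r n x)
        = -∑ x : Fin (n+1) → Fin k, r n x * Real.log (r n x) := by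
      rw [← Finset.sum_neg_distrib]
      apply Finset.sum_congr rfl
      intro x _
      rw [Real.negMulLog_eq_neg]
    simp only
    rw [hsum]
    simp only [hr]
    ring
  -- Step: |F n - E n| small
  have hFE : ∀ n : ℕ, |F n - E n| ≤ (2 * k * (1 + Real.log ((n:ℝ)+2))) / ((n:ℝ)+1) := by
    intro n
    haveI := hprob (n+1)
    have hclass_bd : ∀ x₀ : Fin (n+1) → Fin k,
        |Real.log (((univ : Finset (Fin (n+1) → Fin k)).filter
            (fun y => cnt y = cnt x₀)).card)
          - ((n+1 : ℕ) : ℝ) * ∑ i, Real.negMulLog ((cnt x₀ i : ℝ)/((n+1 : ℕ):ℝ))|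
          ≤ k * (1 + Real.log (((n+1:ℕ):ℝ)+1)) := by
      intro x₀
      exact log_class_bounds (Nat.succ_pos n) x₀ (cnt_sum x₀) (cnt_le' x₀)
        (class_card_mul_le (Nat.succ_pos n) x₀)
        (factorial_le_class_mul (n+1) k x₀ (fun x => stab_card_le x)
          (fun {x y} h => exists_perm_of_cnt_eq h))
        (fun t => log_factorial_ge t) (fun t => log_factorial_le t)
    have hdec := ent_decomp (N := n+1) (k := k) (Nat.succ_pos n) (r n) (hrnn n) (hrsum n)
      (hconst n) hclass_bd
    push_cast at hdec
    have hre : ((n:ℝ)+1+1) = (n:ℝ)+2 := by ring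
    rw [hre] at hdec
    have hN1 : (0:ℝ) < (n:ℝ)+1 := by positivity
    have hEn : F n - E n = (1/((n:ℝ)+1)) * (∑ x, Real.negMulLog (r n x)
        - ((n:ℝ)+1) * ∑ x, r n x * ∑ i, Real.negMulLog ((cnt x i : ℝ)/((n:ℝ)+1))) := by
      rw [hF, hE]
      simp only
      push_cast
      field_simp
    calc |F n - E n| = (1/((n:ℝ)+1)) * |∑ x, Real.negMulLog (r n x)
        - ((n:ℝ)+1) * ∑ x, r n x * ∑ i, Real.negMulLog ((cnt x i : ℝ)/((n:ℝ)+1))| := by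
          rw [hEn, abs_mul, abs_of_nonneg (by positivity : (0:ℝ) ≤ 1/((n:ℝ)+1))]
      _ ≤ (1/((n:ℝ)+1)) * (2 * k * (1 + Real.log ((n:ℝ)+2))) := by
          apply mul_le_mul_of_nonneg_left _ (by positivity)
          push_cast
          exact hdec
      _ = (2 * k * (1 + Real.log ((n:ℝ)+2))) / ((n:ℝ)+1) := by ring
  -- Step: E tends to entropy of p
  have hEtend : Tendsto E atTop (𝓝 (∑ i, Real.negMulLog (p i))) := by
    have hswap : E = fun n => ∑ i, ∑ x : Fin (n+1) → Fin k,
        r n x * Real.negMulLog ((cnt x i : ℝ)/(n+1)) := by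
      funext n
      rw [hE]
      simp only
      calc ∑ x : Fin (n+1) → Fin k, r n x * ∑ i, Real.negMulLog ((cnt x i : ℝ)/(↑n+1))
          = ∑ x : Fin (n+1) → Fin k, ∑ i, r n x * Real.negMulLog ((cnt x i : ℝ)/(↑n+1)) := by
            apply Finset.sum_congr rfl
            intro x _
            rw [Finset.mul_sum]
        _ = ∑ i, ∑ x : Fin (n+1) → Fin k, r n x * Real.negMulLog ((cnt x i : ℝ)/(↑n+1)) :=
            Finset.sum_comm
    rw [hswap]
    apply tendsto_finset_sum
    intro i _
    -- apply UC lemma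
    apply tendsto_sum_negMulLog (κ := fun n => Fin (n+1) → Fin k) (r := r)
      (Y := fun n x => (cnt x i : ℝ)/((n:ℝ)+1)) (p i) hrnn hrsum
      (fun n x => by positivity)
      (fun n x => by
        rw [div_le_one (by positivity)]
        have := cnt_le' x i
        push_cast
        exact_mod_cast this)
      (hp0 i) (hp_le_one i)
    -- variance tends to 0
    set aN : ℕ → ℝ := fun n => (ρ (n+1)
        {s : Fin (n+1) → Fin k | ∀ j : Fin (n+1), j.val = 0 → s j = i}).toReal with haN
    set bN : ℕ → ℝ := fun n => (ρ (n+1)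
        {s : Fin (n+1) → Fin k | ∀ j : Fin (n+1),
          (j.val = 0 → s j = i) ∧ (j.val = 1 → s j = i)}).toReal with hbN
    have ha : Tendsto aN atTop (𝓝 (p i)) := lim1 ρ p hchaos i
    have hb : Tendsto bN atTop (𝓝 (p i * p i)) := lim2 ρ p hchaos i
    have hratio : Tendsto (fun n : ℕ => (n:ℝ)/((n:ℝ)+1)) atTop (𝓝 1) := by
      have h1 : Tendsto (fun n : ℕ => 1 - 1/((n:ℝ)+1)) atTop (𝓝 (1 - 0)) :=
        tendsto_const_nhds.sub tendsto_one_div_add_atTop_nhds_zero_nat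
      rw [sub_zero] at h1
      apply h1.congr
      intro n
      have : ((n:ℝ)+1) ≠ 0 := by positivity
      field_simp
      ring
    have hV' : Tendsto (fun n : ℕ => (aN n * (1/((n:ℝ)+1)) + bN n * ((n:ℝ)/((n:ℝ)+1))
        - (2 * p i) * aN n) + p i^2) atTop (𝓝 0) := by
      have h0 : ((p i * 0 + (p i * p i) * 1) - (2 * p i) * (p i)) + p i^2 = 0 := by ring
      rw [← h0]
      exact (((ha.mul tendsto_one_div_add_atTop_nhds_zero_nat).add (hb.mul hratio)).sub
        (tendsto_const_nhds.mul ha)).add tendsto_const_nhds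
    apply hV'.congr'
    filter_upwards [eventually_ge_atTop 1] with n hn
    haveI := hprob (n+1)
    -- set translations
    have hsetA : {s : Fin (n+1) → Fin k | ∀ j : Fin (n+1), j.val = 0 → s j = i}
        = {x : Fin (n+1) → Fin k | x 0 = i} := by
      ext s
      simp only [Set.mem_setOf_eq]
      constructor
      · intro h; exact h 0 rfl
      · intro h j hj
        have : j = 0 := Fin.ext (by simpa using hj)
        rw [this]; exact h
    have hval1 : (1 : Fin (n+1)).val = 1 := by
      rw [Fin.val_one']
      exact Nat.mod_eq_of_lt (by omega)
    have hsetB : {s : Fin (n+1) → Fin k | ∀ j : Fin (n+1),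
          (j.val = 0 → s j = i) ∧ (j.val = 1 → s j = i)}
        = {x : Fin (n+1) → Fin k | x 0 = i ∧ x 1 = i} := by
      ext s
      simp only [Set.mem_setOf_eq]
      constructor
      · intro h
        exact ⟨(h 0).1 rfl, (h 1).2 hval1⟩
      · intro h j
        constructor
        · intro hj
          have : j = 0 := Fin.ext (by simpa using hj)
          rw [this]; exact h.1
        · intro hj
          have : j = 1 := Fin.ext (by rw [hval1]; exact hj)
          rw [this]; exact h.2
    have hm1 : ∑ x : Fin (n+1) → Fin k, r n x * (cnt x i : ℝ)
        = ((n:ℝ)+1) * aN n := by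
      have := moment1 (ρ (n+1)) (hsym' (n+1)) i
      rw [haN]
      simp only
      rw [hsetA]
      push_cast at this ⊢
      exact this
    have hm2 : ∑ x : Fin (n+1) → Fin k, r n x * (cnt x i : ℝ)^2
        = ((n:ℝ)+1) * aN n + (((n:ℝ)+1) * n) * bN n := by
      have := moment2 (ρ (n+1)) (hsym' (n+1)) i
      rw [haN, hbN]
      simp only
      rw [hsetA, hsetB]
      push_cast at this ⊢
      exact this
    -- expand the variance
    have hexp : ∑ x : Fin (n+1) → Fin k, r n x * ((cnt x i : ℝ)/((n:ℝ)+1) - p i)^2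
        = (1/((n:ℝ)+1))^2 * (∑ x : Fin (n+1) → Fin k, r n x * (cnt x i : ℝ)^2)
          - (2 * p i / ((n:ℝ)+1)) * (∑ x : Fin (n+1) → Fin k, r n x * (cnt x i : ℝ))
          + p i^2 * (∑ x : Fin (n+1) → Fin k, r n x) := by
      rw [Finset.mul_sum, Finset.mul_sum, Finset.mul_sum, ← Finset.sum_sub_distrib,
        ← Finset.sum_add_distrib]
      apply Finset.sum_congr rfl
      intro x _
      have hne : ((n:ℝ)+1) ≠ 0 := by positivity
      field_simp
      ring
    have hNne : ((n:ℝ)+1) ≠ 0 := by positivity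
    rw [hexp, hm1, hm2, hrsum n]
    field_simp
  -- Step: error term tends to 0
  have herr : Tendsto (fun n : ℕ => (2 * (k:ℝ) * (1 + Real.log ((n:ℝ)+2))) / ((n:ℝ)+1))
      atTop (𝓝 0) := by
    have hlogt : Tendsto (fun x : ℝ => Real.log x ^ 1 / (1 * x + (-1))) atTop (𝓝 0) :=
      Real.tendsto_pow_log_div_mul_add_atTop 1 (-1) 1 one_ne_zero
    have hcomp : Tendsto (fun n : ℕ => ((n:ℝ)+2)) atTop atTop :=
      tendsto_atTop_add_const_right _ 2 tendsto_natCast_atTop_atTop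
    have h2 : Tendsto (fun n : ℕ => Real.log ((n:ℝ)+2) / ((n:ℝ)+1)) atTop (𝓝 0) := by
      have := hlogt.comp hcomp
      apply this.congr
      intro n
      simp only [Function.comp_apply]
      rw [pow_one, show (1*((n:ℝ)+2)+(-1)) = (n:ℝ)+1 from by ring]
    have h3 : Tendsto (fun n : ℕ => 2 * (k:ℝ) * (1/((n:ℝ)+1))
        + 2 * (k:ℝ) * (Real.log ((n:ℝ)+2) / ((n:ℝ)+1))) atTop (𝓝 0) := by
      have h0 : 2 * (k:ℝ) * 0 + 2 * (k:ℝ) * 0 = 0 := by ring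
      rw [← h0]
      exact (tendsto_const_nhds.mul tendsto_one_div_add_atTop_nhds_zero_nat).add
        (tendsto_const_nhds.mul h2)
    apply h3.congr
    intro n
    have : ((n:ℝ)+1) ≠ 0 := by positivity
    field_simp
  -- combine
  rw [hFeq]
  have hFdecomp : F = fun n => E n + (F n - E n) := by funext n; ring
  rw [hFdecomp]
  have hlim2 : Tendsto (fun n => F n - E n) atTop (𝓝 0) :=
    squeeze_zero_norm hFE herr
  have := hEtend.add hlim2
  rw [add_zero] at this
  have hfinal : (∑ i, Real.negMulLog (p i)) = -∑ i : Fin k, p i * Real.log (p i) := by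
    rw [← Finset.sum_neg_distrib]
    apply Finset.sum_congr rfl
    intro i _
    rw [Real.negMulLog]
    ring
  rw [hfinal] at this
  exact this

end AuxEntropy
end
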